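/- arXiv:1405.1164 — 9 statements merged into one kernel-verified Lean document; each statement's English description precedes it below -/
import Mathlib

section
/- Let σ > 0, μ ∈ ℝ, λ > 0, and Y ~ N(μ, σ²). Let ST(t,λ) = t+λ if t ≤ −λ, 0 if −λ < t < λ, t−λ if t ≥ λ be the soft-thresholding map. Then E[(Y − μ) · ST(Y, λ)] = σ² · P(|Y| > λ). -/
/-! For the density `φ` of `N(m, v)` one has `φ' = -((t - m) / v) φ`, so the derivative of
`(t - a) φ` is `φ - (t - m) (t - a) φ / v`. Integrating it over `(a, ∞)`, where `(t - a) φ`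
vanishes at both ends, gives `E[(Y - m) (Y - a)⁺] = v P(Y > a)`. Soft-thresholding is
`(t - λ)⁺ - (-t - λ)⁺`, and the reflection `Y ↦ -Y`, mapping `N(m, v)` to `N(-m, v)`, reduces
the second part to the first, with `P(Y < -λ)` in place of `P(Y > λ)`. -/

open MeasureTheory ProbabilityTheory

noncomputable section

/-- Soft-thresholding with threshold `λ`:
`softThresh(t, λ) = t + λ` if `t ≤ -λ`, `0` if `-λ < t < λ`, `t - λ` if `t ≥ λ`. -/
def softThresh (t lam : ℝ) : ℝ := if t ≤ -lam then t + lam else if t < lam then 0 else t - lam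

open Real Set
open scoped NNReal

namespace ProbabilityTheory

variable {m : ℝ} {v : ℝ≥0}

lemma hasDerivAt_gaussianPDFReal (x : ℝ) :
    HasDerivAt (gaussianPDFReal m v) (-((x - m) / v) * gaussianPDFReal m v x) x := by
  have h : HasDerivAt (fun y ↦ -(y - m) ^ 2 / (2 * v)) (-(2 * (x - m)) / (2 * v)) x := by
    simpa using (((hasDerivAt_id x).sub_const m).pow 2).neg.div_const (2 * (v : ℝ))
  rw [gaussianPDFReal_def]
  exact (h.exp.const_mul _).congr_deriv (by ring)

lemma integrable_gaussianPDFReal_mul (hv : v ≠ 0) {f : ℝ → ℝ}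
    (hf : Integrable f (gaussianReal m v)) :
    Integrable fun x ↦ gaussianPDFReal m v x * f x := by
  rw [gaussianReal_of_var_ne_zero _ hv, integrable_withDensity_iff_integrable_smul'
    (measurable_gaussianPDF m v) (ae_of_all _ fun _ ↦ gaussianPDF_lt_top)] at hf
  simpa [toReal_gaussianPDF] using hf

lemma memLp_sub_const_gaussianReal (c : ℝ) : MemLp (fun t ↦ t - c) 2 (gaussianReal m v) :=
  (memLp_id_gaussianReal 2).sub (memLp_const c)

lemma integrable_sub_mul_sub_gaussianReal (b c : ℝ) :
    Integrable (fun t ↦ (t - b) * (t - c)) (gaussianReal m v) :=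
  (memLp_sub_const_gaussianReal b).integrable_mul (memLp_sub_const_gaussianReal c)

lemma integrable_sub_mul_max_gaussianReal {f : ℝ → ℝ} (hf : MemLp f 2 (gaussianReal m v))
    (b : ℝ) : Integrable (fun t ↦ (t - b) * max (f t) 0) (gaussianReal m v) :=
  (memLp_sub_const_gaussianReal b).integrable_mul hf.pos_part

lemma setIntegral_Ioi_sub_mul_sub_mul_gaussianPDFReal (hv : v ≠ 0) (a : ℝ) :
    ∫ t in Ioi a, (t - m) * (t - a) * gaussianPDFReal m v t
      = v * ∫ t in Ioi a, gaussianPDFReal m v t := by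
  set φ := gaussianPDFReal m v
  have hφ : Integrable φ := integrable_gaussianPDFReal m v
  have hq : Integrable fun t ↦ (t - m) * (t - a) * φ t := by
    simpa [mul_comm] using
      integrable_gaussianPDFReal_mul hv (integrable_sub_mul_sub_gaussianReal m a)
  set F' := fun t ↦ φ t - (v : ℝ)⁻¹ * ((t - m) * (t - a) * φ t)
  have hF : ∀ x, HasDerivAt (fun t ↦ (t - a) * φ t) (F' x) x := fun x ↦
    (((hasDerivAt_id x).sub_const a).mul (hasDerivAt_gaussianPDFReal x)).congr_deriv
      (by simp only [F', id_eq]; ring)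
  have hF'int : Integrable F' := hφ.sub (hq.const_mul _)
  have hFint : Integrable fun t ↦ (t - a) * φ t := by
    simpa [mul_comm] using integrable_gaussianPDFReal_mul hv
      ((memLp_sub_const_gaussianReal a).integrable one_le_two)
  have hlim := tendsto_zero_of_hasDerivAt_of_integrableOn_Ioi (a := a) (fun x _ ↦ hF x)
    hF'int.integrableOn hFint.integrableOn
  have hftc := integral_Ioi_of_hasDerivAt_of_tendsto' (a := a) (fun x _ ↦ hF x)
    hF'int.integrableOn hlim
  rw [integral_sub hφ.integrableOn (hq.const_mul _).integrableOn, integral_const_mul] at hftc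
  simp only [sub_self, zero_mul] at hftc
  field_simp at hftc
  linarith

lemma integral_sub_mul_max_sub_gaussianReal (a : ℝ) :
    ∫ t, (t - m) * max (t - a) 0 ∂gaussianReal m v = v * (gaussianReal m v (Ioi a)).toReal := by
  rcases eq_or_ne v 0 with rfl | hv
  · simp [gaussianReal_zero_var]
  have hsupp : ∀ t, gaussianPDFReal m v t • ((t - m) * max (t - a) 0)
      = (Ioi a).indicator (fun t ↦ (t - m) * (t - a) * gaussianPDFReal m v t) t := by
    intro t
    by_cases ht : a < t
    · simp only [smul_eq_mul, indicator_of_mem (mem_Ioi.2 ht), max_eq_left (sub_nonneg.2 ht.le)]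
      ring
    · simp [ht, max_eq_right (sub_nonpos.2 (not_lt.1 ht))]
  rw [integral_gaussianReal_eq_integral_smul hv]
  simp_rw [hsupp]
  rw [integral_indicator measurableSet_Ioi, setIntegral_Ioi_sub_mul_sub_mul_gaussianPDFReal hv,
    gaussianReal_apply_eq_integral _ hv, ENNReal.toReal_ofReal
      (setIntegral_nonneg measurableSet_Ioi fun t _ ↦ gaussianPDFReal_nonneg m v t)]

lemma integral_sub_mul_max_neg_sub_gaussianReal (a : ℝ) :
    ∫ t, (t - m) * max (-t - a) 0 ∂gaussianReal m v
      = -(v * (gaussianReal m v (Iio (-a))).toReal) := by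
  have h := integral_sub_mul_max_sub_gaussianReal (m := -m) (v := v) a
  rw [← gaussianReal_map_neg, integral_map measurable_neg.aemeasurable (by fun_prop),
    Measure.map_apply measurable_neg measurableSet_Ioi, Set.neg_preimage, Set.neg_Ioi] at h
  rw [← h, ← integral_neg]
  congr 1 with t
  ring

end ProbabilityTheory

lemma softThresh_eq_max_sub_max {lam : ℝ} (hlam : 0 ≤ lam) (t : ℝ) :
    softThresh t lam = max (t - lam) 0 - max (-t - lam) 0 := by
  unfold softThresh
  split_ifs with h₁ h₂
  · rw [max_eq_right (by linarith), max_eq_left (by linarith)]; ring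
  · rw [max_eq_right (by linarith), max_eq_right (by linarith)]; ring
  · rw [max_eq_left (by linarith), max_eq_right (by linarith)]; ring

lemma setOf_lt_abs_eq_Iio_union_Ioi (a : ℝ) : {t : ℝ | a < |t|} = Iio (-a) ∪ Ioi a := by
  ext t
  simp only [mem_ofPred_eq, mem_union, mem_Iio, mem_Ioi, lt_abs, lt_neg, or_comm]

theorem stein_identity_soft_thresholding_general
    (σ : ℝ) (m : ℝ) (lam : ℝ) (hlam : 0 < lam) :
    (∫ t : ℝ, (t - m) * softThresh t lam ∂(gaussianReal m ⟨σ ^ 2, sq_nonneg σ⟩))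
      = σ ^ 2 * ((gaussianReal m ⟨σ ^ 2, sq_nonneg σ⟩) {t : ℝ | lam < |t|}).toReal := by
  set v : ℝ≥0 := ⟨σ ^ 2, sq_nonneg σ⟩
  have hdisj : Disjoint (Iio (-lam)) (Ioi lam) :=
    Iio_disjoint_Ioi_of_le (neg_le_self hlam.le)
  have hpos : Integrable (fun t ↦ (t - m) * max (t - lam) 0) (gaussianReal m v) :=
    integrable_sub_mul_max_gaussianReal (memLp_sub_const_gaussianReal lam) m
  have hneg : Integrable (fun t ↦ (t - m) * max (-t - lam) 0) (gaussianReal m v) :=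
    integrable_sub_mul_max_gaussianReal ((memLp_id_gaussianReal 2).neg.sub (memLp_const lam)) m
  simp_rw [softThresh_eq_max_sub_max hlam.le, mul_sub]
  rw [integral_sub hpos hneg,
    integral_sub_mul_max_sub_gaussianReal, integral_sub_mul_max_neg_sub_gaussianReal,
    setOf_lt_abs_eq_Iio_union_Ioi, measure_union hdisj measurableSet_Ioi,
    ENNReal.toReal_add (measure_ne_top _ _) (measure_ne_top _ _)]
  rw [show (v : ℝ) = σ ^ 2 from rfl]
  ring

/-- **Stein identity for soft-thresholding.**  For `Y ~ N(μ, σ²)` and `λ > 0`,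
`E[(Y - μ) · softThresh(Y, λ)] = σ² · P(|Y| > λ)`. -/
theorem stein_identity_soft_thresholding
    (σ : ℝ) (hσ : 0 < σ) (m : ℝ) (lam : ℝ) (hlam : 0 < lam) :
    (∫ t : ℝ, (t - m) * softThresh t lam ∂(gaussianReal m ⟨σ ^ 2, sq_nonneg σ⟩))
      = σ ^ 2 * ((gaussianReal m ⟨σ ^ 2, sq_nonneg σ⟩) {t : ℝ | lam < |t|}).toReal :=
  stein_identity_soft_thresholding_general σ m lam hlam
end
end

section
/- Let λ > 0, 0 < ε < 2λ, σ > 0, μ0 ∈ ℝ^P, and let Y have independent coordinates Y_i ~ N((μ0)_i, σ²). Define h : ℝ → ℝ by h(t) = 1 if t ≤ −λ, 0 if −λ < t < λ, −1 if t ≥ λ. Then Var[ (1/P) · (1/ε) Σ_{i=1}^P (h(Y_i + ε) − h(Y_i)) ] ≤ √2 / (√π · σ · P · ε). -/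
open MeasureTheory ProbabilityTheory
open scoped BigOperators

noncomputable section

/-- The λ-derivative of the soft-thresholding map `t ↦ ST(t, λ)` away from `|t| = λ`:
`h(t) = 1` if `t ≤ -λ`, `0` if `-λ < t < λ`, `-1` if `t ≥ λ`. -/
def hST (lam t : ℝ) : ℝ := if t ≤ -lam then 1 else if t < lam then 0 else -1

/-!
Since `0 < ε < 2λ`, the jump `h(t + ε) - h(t)` is `-1` exactly on the set
`A = (-λ-ε, -λ] ∪ [λ-ε, λ)` of Lebesgue measure `2ε`, and `0` elsewhere. The summands are
independent, so the variance of the sum is the sum of the variances, and each of these is at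
most `P(Y_i ∈ A) ≤ 2ε · (2πσ²)^{-1/2}`, the Gaussian density being bounded by its peak value.
-/

open Real Set

theorem hST_add_sub_eq_neg_indicator {lam ε : ℝ} (hε : 0 < ε) (hε2 : ε < 2 * lam) (t : ℝ) :
    hST lam (t + ε) - hST lam t =
      -(Ioc (-lam - ε) (-lam) ∪ Ico (lam - ε) lam).indicator 1 t := by
  simp only [hST, indicator_apply, mem_union, mem_Ioc, mem_Ico, Pi.one_apply]
  split_ifs <;> grind

theorem gaussianPDFReal_le_inv_sqrt (m : ℝ) (v : NNReal) (x : ℝ) :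
    gaussianPDFReal m v x ≤ (√(2 * π * v))⁻¹ := by
  rw [gaussianPDFReal]
  refine mul_le_of_le_one_right (by positivity) (exp_le_one_iff.2 ?_)
  rw [neg_div, neg_nonpos]
  positivity

theorem measureReal_gaussianReal_le {m : ℝ} {v : NNReal} (hv : v ≠ 0) {s : Set ℝ} {L : ℝ}
    (hL : 0 ≤ L) (hs : volume s ≤ ENNReal.ofReal L) :
    (gaussianReal m v).real s ≤ L / √(2 * π * v) := by
  refine ENNReal.toReal_le_of_le_ofReal (by positivity) ?_
  calc gaussianReal m v s = ∫⁻ x in s, gaussianPDF m v x := gaussianReal_apply m hv s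
    _ ≤ ∫⁻ _ in s, ENNReal.ofReal (√(2 * π * v))⁻¹ :=
        lintegral_mono fun x => ENNReal.ofReal_le_ofReal (gaussianPDFReal_le_inv_sqrt m v x)
    _ = volume s * ENNReal.ofReal (√(2 * π * v))⁻¹ := by rw [setLIntegral_const, mul_comm]
    _ ≤ ENNReal.ofReal L * ENNReal.ofReal (√(2 * π * v))⁻¹ := by gcongr
    _ = ENNReal.ofReal (L / √(2 * π * v)) := by rw [← ENNReal.ofReal_mul hL, div_eq_mul_inv]

theorem variance_indicator_one_le {Ω : Type*} [MeasurableSpace Ω] {μ : Measure Ω}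
    [IsProbabilityMeasure μ] {s : Set Ω} (hs : MeasurableSet s) :
    Var[s.indicator 1; μ] ≤ μ.real s := by
  have hsq : s.indicator (1 : Ω → ℝ) ^ 2 = s.indicator 1 := by
    ext x
    by_cases hx : x ∈ s <;> simp [hx]
  calc Var[s.indicator 1; μ] ≤ μ[s.indicator (1 : Ω → ℝ) ^ 2] :=
        variance_le_expectation_sq (aestronglyMeasurable_one.indicator hs)
    _ = μ.real s := by rw [hsq, integral_indicator_one hs]

theorem variance_hST_add_sub_gaussianReal_le {lam ε : ℝ} (hε : 0 < ε) (hε2 : ε < 2 * lam)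
    (m : ℝ) {v : NNReal} (hv : v ≠ 0) :
    Var[fun t => hST lam (t + ε) - hST lam t; gaussianReal m v] ≤ 2 * ε / √(2 * π * v) := by
  have hA : MeasurableSet (Ioc (-lam - ε) (-lam) ∪ Ico (lam - ε) lam) :=
    measurableSet_Ioc.union measurableSet_Ico
  have hvolA : volume (Ioc (-lam - ε) (-lam) ∪ Ico (lam - ε) lam) ≤ ENNReal.ofReal (2 * ε) := by
    refine (measure_union_le _ _).trans ?_
    rw [Real.volume_Ioc, Real.volume_Ico, ← ENNReal.ofReal_add (by linarith) (by linarith)]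
    exact ENNReal.ofReal_le_ofReal (by linarith)
  simp_rw [hST_add_sub_eq_neg_indicator hε hε2]
  rw [variance_fun_neg]
  exact (variance_indicator_one_le hA).trans
    (measureReal_gaussianReal_le hv (by positivity) hvolA)

theorem fd_dof_gradient_variance_bound_general
    {P : ℕ} (lam ε σ : ℝ) (hε : 0 < ε) (hε2 : ε < 2 * lam) (hσ : 0 < σ)
    (μ0 : Fin P → ℝ) :
    variance (fun y : Fin P → ℝ =>
        (1 / (P : ℝ)) * ((1 / ε) * ∑ i : Fin P, (hST lam (y i + ε) - hST lam (y i))))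
        (Measure.pi fun i => gaussianReal (μ0 i) ⟨σ ^ 2, sq_nonneg σ⟩)
      ≤ Real.sqrt 2 / (Real.sqrt Real.pi * σ * P * ε) := by
  set v : NNReal := ⟨σ ^ 2, sq_nonneg σ⟩
  have hv : v ≠ 0 := fun h => pow_ne_zero 2 hσ.ne' (congrArg NNReal.toReal h)
  set g : ℝ → ℝ := fun t => hST lam (t + ε) - hST lam t
  have hg_memLp : ∀ i, MemLp g 2 (gaussianReal (μ0 i) v) := fun i => by
    rw [show g = _ from funext (hST_add_sub_eq_neg_indicator hε hε2)]
    exact (memLp_indicator_const 2 (measurableSet_Ioc.union measurableSet_Ico) 1 (by simp)).neg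
  have hsum : Var[∑ i : Fin P, fun y : Fin P → ℝ => g (y i);
      Measure.pi fun i => gaussianReal (μ0 i) v] ≤ P * (2 * ε / √(2 * π * v)) := by
    rw [variance_sum_pi hg_memLp]
    exact (Finset.sum_le_sum fun i _ =>
      variance_hST_add_sub_gaussianReal_le hε hε2 (μ0 i) hv).trans_eq (by simp)
  have hfun : (fun y : Fin P → ℝ =>
        (1 / (P : ℝ)) * ((1 / ε) * ∑ i : Fin P, (hST lam (y i + ε) - hST lam (y i))))
      = fun y => (1 / (P * ε)) * (∑ i : Fin P, fun y : Fin P → ℝ => g (y i)) y := by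
    ext y
    simp only [Finset.sum_apply, g]
    ring
  have hsqrt : √(2 * π * v) = √2 * √π * σ := by
    rw [show (v : ℝ) = σ ^ 2 from rfl, sqrt_mul (by positivity), sqrt_mul zero_le_two,
      sqrt_sq hσ.le]
  rw [hfun, variance_const_mul]
  calc (1 / (P * ε)) ^ 2 * Var[∑ i : Fin P, fun y : Fin P → ℝ => g (y i); _]
      ≤ (1 / (P * ε)) ^ 2 * (P * (2 * ε / √(2 * π * v))) := by gcongr
    _ = √2 / (√π * σ * P * ε) := by
      rcases eq_or_ne (P : ℝ) 0 with hP | hP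
      · simp [hP]
      rw [hsqrt]
      field_simp
      rw [sq_sqrt zero_le_two]

/-- **Variance bound for the normalized finite-difference DOF gradient of
soft-thresholding.**  For `0 < ε < 2λ` and independent `Y_i ~ N((μ0)_i, σ²)`,
`Var[(1/P)(1/ε) Σ_i (h(Y_i + ε) - h(Y_i))] ≤ √2 / (√π · σ · P · ε)`. -/
theorem fd_dof_gradient_variance_bound
    {P : ℕ} (lam ε σ : ℝ) (hlam : 0 < lam) (hε : 0 < ε) (hε2 : ε < 2 * lam) (hσ : 0 < σ)
    (μ0 : Fin P → ℝ) :
    variance (fun y : Fin P → ℝ =>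
        (1 / (P : ℝ)) * ((1 / ε) * ∑ i : Fin P, (hST lam (y i + ε) - hST lam (y i))))
        (Measure.pi fun i => gaussianReal (μ0 i) ⟨σ ^ 2, sq_nonneg σ⟩)
      ≤ Real.sqrt 2 / (Real.sqrt Real.pi * σ * P * ε) :=
  fd_dof_gradient_variance_bound_general lam ε σ hε hε2 hσ μ0
end
end

section
/- Fix λ > 0 and σ > 0. For each P ≥ 1 let μ0^{(P)} ∈ ℝ^P be arbitrary and let Y^{(P)} have independent coordinates Y_i ~ N((μ0^{(P)})_i, σ²). Let ε : ℕ → (0,∞) satisfy ε(P) → 0 and P·ε(P) → ∞ as P → ∞. Define h(t) = 1 if t ≤ −λ, 0 if −λ < t < λ, −1 if t ≥ λ; ST(t,λ) = t+λ if t ≤ −λ, 0 if −λ<t<λ, t−λ if t ≥ λ; SUGAR_P(y) = 2 Σ_{i=1}^P h(y_i)(ST(y_i,λ) − y_i) + (2σ²/ε(P)) Σ_{i=1}^P (h(y_i + ε(P)) − h(y_i)); and R'_P = 2λ Σ_{i=1}^P P(|Y_i| > λ) − σ√(2/π) Σ_{i=1}^P [ exp(−((μ0^{(P)})_i + λ)²/(2σ²))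 + exp(−((μ0^{(P)})_i − λ)²/(2σ²)) ]. Then for every η > 0, lim_{P→∞} P( | (1/P)(SUGAR_P(Y^{(P)}) − R'_P) | ≥ η ) = 0. -/
/-!
Coordinatewise, `h(y + ε) - h(y) = -1` exactly on two windows of width `ε` just below `±λ`, so the
`i`-th SUGAR summand is `2λ 1{|y| ≥ λ} - (2σ²/ε) 1{window}`. Its Gaussian mean differs from the
`i`-th summand of `R'_P` by `2σ²/ε` times the error of the rectangle rule `P((a - ε, a]) ≈ ε φ(a)`
at `a = ±λ`; as the density `φ` is Lipschitz, that error is `O(ε²)`, so the bias is `O(ε)`. Since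
`φ` is bounded, the second moment is `O(1 + 1/ε)`. The coordinates are independent, so Chebyshev
bounds the probability by `O(1/P + 1/(P ε))`, which tends to `0`.
-/

open MeasureTheory ProbabilityTheory Filter
open scoped BigOperators Topology

noncomputable section

open Set Real
open scoped NNReal

/-- `⟨σ ^ 2, _⟩` elaborates at type `{r : ℝ // 0 ≤ r}`, which instance search does not unfold to
`ℝ≥0`, so the general instance for `gaussianReal` is not found without this one. -/
instance isProbabilityMeasure_gaussianReal_sq (m σ : ℝ) :
    IsProbabilityMeasure (gaussianReal m ⟨σ ^ 2, sq_nonneg σ⟩) :=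
  instIsProbabilityMeasureGaussianReal m _

def sugarSummand (lam σ e y : ℝ) : ℝ :=
  2 * hST lam y * (softThresh y lam - y) + 2 * σ ^ 2 / e * (hST lam (y + e) - hST lam y)

def riskDerivSummand (lam σ m : ℝ) : ℝ :=
  2 * lam * (gaussianReal m ⟨σ ^ 2, sq_nonneg σ⟩).real {t | lam < |t|}
    - σ * √(2 / π) * (exp (-(m + lam) ^ 2 / (2 * σ ^ 2)) + exp (-(m - lam) ^ 2 / (2 * σ ^ 2)))

/-- The points `y` at which `hST` jumps between `y` and `y + e`. -/
def crossingSet (lam e : ℝ) : Set ℝ := Ioc (-lam - e) (-lam) ∪ Ico (lam - e) lam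

section Thresholding

variable {lam σ e : ℝ}

lemma two_mul_hST_mul_softThresh_sub (lam y : ℝ) :
    2 * hST lam y * (softThresh y lam - y) = {t : ℝ | lam ≤ |t|}.indicator (fun _ ↦ 2 * lam) y := by
  simp only [hST, softThresh, indicator_apply, mem_ofPred_eq, le_abs']
  split_ifs <;> grind

lemma hST_add_sub_hST (he : 0 < e) (he2 : e < 2 * lam) (y : ℝ) :
    hST lam (y + e) - hST lam y = -(crossingSet lam e).indicator 1 y := by
  simp only [hST, crossingSet, indicator_apply, mem_union, mem_Ioc, mem_Ico, Pi.one_apply]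
  split_ifs <;> grind

lemma measurableSet_le_abs (lam : ℝ) : MeasurableSet {t : ℝ | lam ≤ |t|} :=
  measurableSet_le measurable_const measurable_abs

lemma measurableSet_crossingSet (lam e : ℝ) : MeasurableSet (crossingSet lam e) :=
  measurableSet_Ioc.union measurableSet_Ico

lemma sugarSummand_eq_indicator (he : 0 < e) (he2 : e < 2 * lam) :
    sugarSummand lam σ e = fun y ↦ {t : ℝ | lam ≤ |t|}.indicator (fun _ ↦ 2 * lam) y
      - 2 * σ ^ 2 / e * (crossingSet lam e).indicator 1 y := by
  ext y
  rw [sugarSummand, two_mul_hST_mul_softThresh_sub, hST_add_sub_hST he he2]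
  ring

lemma memLp_sugarSummand (he : 0 < e) (he2 : e < 2 * lam) (μ : Measure ℝ) [IsFiniteMeasure μ] :
    MemLp (sugarSummand lam σ e) 2 μ := by
  rw [sugarSummand_eq_indicator he he2]
  have hA : MemLp ({t : ℝ | lam ≤ |t|}.indicator fun _ ↦ 2 * lam) 2 μ :=
    (memLp_const _).indicator (measurableSet_le_abs lam)
  have hI : MemLp ((crossingSet lam e).indicator fun _ ↦ (1 : ℝ)) 2 μ :=
    (memLp_const 1).indicator (measurableSet_crossingSet lam e)
  exact hA.sub (hI.const_mul (2 * σ ^ 2 / e))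

lemma sugarSummand_sq_le (he : 0 < e) (he2 : e < 2 * lam) (y : ℝ) :
    sugarSummand lam σ e y ^ 2
      ≤ 8 * lam ^ 2 + 2 * (2 * σ ^ 2 / e) ^ 2 * (crossingSet lam e).indicator 1 y := by
  rw [sugarSummand_eq_indicator he he2]
  by_cases hA : lam ≤ |y| <;> by_cases hI : y ∈ crossingSet lam e <;>
    simp [hA, hI] <;> nlinarith [sq_nonneg (2 * lam + 2 * σ ^ 2 / e)]

end Thresholding

lemma abs_setIntegral_Ioc_sub_mul_le {f : ℝ → ℝ} {a e C : ℝ} (he : 0 ≤ e)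
    (hf : IntegrableOn f (Ioc (a - e) a)) (hC : ∀ x ∈ Ioc (a - e) a, |f x - f a| ≤ C) :
    |(∫ x in Ioc (a - e) a, f x) - e * f a| ≤ C * e := by
  have hvol : volume.real (Ioc (a - e) a) = e := by simp [measureReal_def, he]
  have hconst : e * f a = ∫ _ in Ioc (a - e) a, f a := by
    rw [setIntegral_const, hvol, smul_eq_mul]
  rw [hconst, ← integral_sub hf (integrableOn_const measure_Ioc_lt_top.ne), ← Real.norm_eq_abs]
  calc ‖∫ x in Ioc (a - e) a, (f x - f a)‖
      ≤ C * volume.real (Ioc (a - e) a) :=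
        norm_setIntegral_le_of_norm_le_const measure_Ioc_lt_top hC
    _ = C * e := by rw [hvol]

section Gaussian

variable {σ : ℝ}

lemma abs_mul_exp_neg_sq_div_le (hσ : 0 < σ) (u : ℝ) : |u| * exp (-u ^ 2 / (2 * σ ^ 2)) ≤ σ := by
  -- `|u| / σ ≤ 1 + (u / σ) ^ 2 / 2 ≤ exp (u ^ 2 / (2 σ ^ 2))`
  have hexp : |u| ≤ σ * exp (u ^ 2 / (2 * σ ^ 2)) := by
    have hx : (2 * σ ^ 2) * (u ^ 2 / (2 * σ ^ 2)) = u ^ 2 := by field_simp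
    nlinarith [add_one_le_exp (u ^ 2 / (2 * σ ^ 2)), sq_nonneg (|u| - σ), sq_abs u]
  calc |u| * exp (-u ^ 2 / (2 * σ ^ 2))
      ≤ σ * exp (u ^ 2 / (2 * σ ^ 2)) * exp (-u ^ 2 / (2 * σ ^ 2)) := by gcongr
    _ = σ := by rw [mul_assoc, ← exp_add, neg_div, add_neg_cancel, exp_zero, mul_one]

lemma abs_exp_neg_sq_div_sub_le (hσ : 0 < σ) (u w : ℝ) :
    |exp (-u ^ 2 / (2 * σ ^ 2)) - exp (-w ^ 2 / (2 * σ ^ 2))| ≤ σ⁻¹ * |u - w| := by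
  have hderiv (x : ℝ) : HasDerivAt (fun t ↦ exp (-t ^ 2 / (2 * σ ^ 2)))
      (exp (-x ^ 2 / (2 * σ ^ 2)) * (-(2 * x) / (2 * σ ^ 2))) x := by
    simpa using ((hasDerivAt_pow 2 x).neg.div_const (2 * σ ^ 2)).exp
  have hbound (x : ℝ) : ‖exp (-x ^ 2 / (2 * σ ^ 2)) * (-(2 * x) / (2 * σ ^ 2))‖ ≤ σ⁻¹ := by
    rw [norm_mul, norm_div, norm_neg, norm_mul, Real.norm_of_nonneg (exp_pos _).le,
      Real.norm_of_nonneg (by positivity : (0 : ℝ) ≤ 2 * σ ^ 2), Real.norm_two, Real.norm_eq_abs]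
    calc exp (-x ^ 2 / (2 * σ ^ 2)) * (2 * |x| / (2 * σ ^ 2))
        = |x| * exp (-x ^ 2 / (2 * σ ^ 2)) / σ ^ 2 := by field_simp
      _ ≤ σ / σ ^ 2 := by gcongr; exact abs_mul_exp_neg_sq_div_le hσ x
      _ = σ⁻¹ := by field_simp
  simpa [Real.norm_eq_abs] using Convex.norm_image_sub_le_of_norm_hasDerivWithin_le
    (fun x _ ↦ (hderiv x).hasDerivWithinAt) (fun x _ ↦ hbound x) convex_univ
    (mem_univ w) (mem_univ u)

lemma le_sqrt_two_pi_mul_sq (hσ : 0 < σ) : σ ≤ √(2 * π * σ ^ 2) := by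
  rw [sqrt_mul (by positivity), sqrt_sq hσ.le]
  exact le_mul_of_one_le_left hσ.le (one_le_sqrt.mpr (by nlinarith [pi_gt_three]))

lemma gaussianPDFReal_sq_def (m x : ℝ) :
    gaussianPDFReal m ⟨σ ^ 2, sq_nonneg σ⟩ x
      = (√(2 * π * σ ^ 2))⁻¹ * exp (-(x - m) ^ 2 / (2 * σ ^ 2)) := rfl

lemma gaussianPDFReal_le_inv (hσ : 0 < σ) (m x : ℝ) :
    gaussianPDFReal m ⟨σ ^ 2, sq_nonneg σ⟩ x ≤ σ⁻¹ := by
  rw [gaussianPDFReal_sq_def]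
  calc (√(2 * π * σ ^ 2))⁻¹ * exp (-(x - m) ^ 2 / (2 * σ ^ 2))
      ≤ σ⁻¹ * 1 := by
        gcongr
        · exact le_sqrt_two_pi_mul_sq hσ
        · exact exp_le_one_iff.mpr (div_nonpos_of_nonpos_of_nonneg (by nlinarith) (by positivity))
    _ = σ⁻¹ := mul_one _

lemma abs_gaussianPDFReal_sub_le (hσ : 0 < σ) (m x y : ℝ) :
    |gaussianPDFReal m ⟨σ ^ 2, sq_nonneg σ⟩ x - gaussianPDFReal m ⟨σ ^ 2, sq_nonneg σ⟩ y|
      ≤ (σ ^ 2)⁻¹ * |x - y| := by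
  rw [gaussianPDFReal_sq_def, gaussianPDFReal_sq_def]
  rw [← mul_sub, abs_mul, abs_of_pos (by positivity)]
  calc (√(2 * π * σ ^ 2))⁻¹ *
        |exp (-(x - m) ^ 2 / (2 * σ ^ 2)) - exp (-(y - m) ^ 2 / (2 * σ ^ 2))|
      ≤ σ⁻¹ * (σ⁻¹ * |x - m - (y - m)|) := by
        gcongr
        · exact le_sqrt_two_pi_mul_sq hσ
        · exact abs_exp_neg_sq_div_sub_le hσ _ _
    _ = (σ ^ 2)⁻¹ * |x - y| := by rw [sub_sub_sub_cancel_right]; ring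

lemma gaussianReal_real_eq_setIntegral {v : ℝ≥0} (hv : v ≠ 0) (m : ℝ) (s : Set ℝ) :
    (gaussianReal m v).real s = ∫ x in s, gaussianPDFReal m v x := by
  rw [measureReal_def, gaussianReal_apply_eq_integral m hv,
    ENNReal.toReal_ofReal (integral_nonneg fun x ↦ gaussianPDFReal_nonneg m v x)]

lemma sq_nnreal_ne_zero (hσ : σ ≠ 0) : (⟨σ ^ 2, sq_nonneg σ⟩ : ℝ≥0) ≠ 0 :=
  fun h ↦ pow_ne_zero 2 hσ (congrArg NNReal.toReal h :)

lemma gaussianReal_real_Ioc_le (hσ : 0 < σ) (m a : ℝ) {e : ℝ} (he : 0 ≤ e) :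
    (gaussianReal m ⟨σ ^ 2, sq_nonneg σ⟩).real (Ioc (a - e) a) ≤ σ⁻¹ * e := by
  rw [gaussianReal_real_eq_setIntegral (sq_nnreal_ne_zero hσ.ne')]
  calc ∫ x in Ioc (a - e) a, gaussianPDFReal m ⟨σ ^ 2, sq_nonneg σ⟩ x
      ≤ ‖∫ x in Ioc (a - e) a, gaussianPDFReal m ⟨σ ^ 2, sq_nonneg σ⟩ x‖ := le_abs_self _
    _ ≤ σ⁻¹ * volume.real (Ioc (a - e) a) := by
        refine norm_setIntegral_le_of_norm_le_const measure_Ioc_lt_top fun x _ ↦ ?_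
        exact (Real.norm_of_nonneg (gaussianPDFReal_nonneg _ _ _)).trans_le
          (gaussianPDFReal_le_inv hσ m x)
    _ = σ⁻¹ * e := by simp [measureReal_def, he]

lemma abs_gaussianReal_real_Ioc_sub_le (hσ : 0 < σ) (m a : ℝ) {e : ℝ} (he : 0 ≤ e) :
    |(gaussianReal m ⟨σ ^ 2, sq_nonneg σ⟩).real (Ioc (a - e) a)
        - e * gaussianPDFReal m ⟨σ ^ 2, sq_nonneg σ⟩ a| ≤ (σ ^ 2)⁻¹ * e ^ 2 := by
  rw [gaussianReal_real_eq_setIntegral (sq_nnreal_ne_zero hσ.ne')]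
  refine (abs_setIntegral_Ioc_sub_mul_le (C := (σ ^ 2)⁻¹ * e) he
    (integrable_gaussianPDFReal m _).integrableOn
    fun x hx ↦ (abs_gaussianPDFReal_sub_le hσ m x a).trans ?_).trans_eq (by ring)
  have hxa : |x - a| ≤ e := abs_le.mpr ⟨by linarith [hx.1], by linarith [hx.2]⟩
  gcongr

lemma gaussianReal_real_le_abs_eq_lt_abs {v : ℝ≥0} (hv : v ≠ 0) (m lam : ℝ) :
    (gaussianReal m v).real {t | lam ≤ |t|} = (gaussianReal m v).real {t | lam < |t|} := by
  have := nullSingletonClass_gaussianReal (μ := m) hv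
  have hle : {t : ℝ | lam ≤ |t|} = Iic (-lam) ∪ Ici lam := by ext; simp [le_abs']
  have hlt : {t : ℝ | lam < |t|} = Iio (-lam) ∪ Ioi lam := by ext; simp [lt_abs, lt_neg, or_comm]
  rw [hle, hlt]
  exact measureReal_congr (Iio_ae_eq_Iic.union Ioi_ae_eq_Ici).symm

lemma gaussianReal_real_crossingSet {v : ℝ≥0} (hv : v ≠ 0) (m : ℝ) {lam e : ℝ}
    (he2 : e < 2 * lam) :
    (gaussianReal m v).real (crossingSet lam e)
      = (gaussianReal m v).real (Ioc (-lam - e) (-lam))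
        + (gaussianReal m v).real (Ioc (lam - e) lam) := by
  have := nullSingletonClass_gaussianReal (μ := m) hv
  have hdisj : Disjoint (Ioc (-lam - e) (-lam)) (Ico (lam - e) lam) :=
    disjoint_left.mpr fun x hx hx' ↦ by linarith [hx.2, hx'.1]
  rw [crossingSet, measureReal_union hdisj measurableSet_Ico, measureReal_congr Ico_ae_eq_Ioc]

end Gaussian

section Moments

variable {lam σ e : ℝ}

lemma integral_sugarSummand (he : 0 < e) (he2 : e < 2 * lam) (μ : Measure ℝ) [IsFiniteMeasure μ] :
    ∫ y, sugarSummand lam σ e y ∂μ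
      = 2 * lam * μ.real {t | lam ≤ |t|} - 2 * σ ^ 2 / e * μ.real (crossingSet lam e) := by
  rw [sugarSummand_eq_indicator he he2, integral_sub, integral_const_mul,
    integral_indicator_const _ (measurableSet_le_abs lam),
    integral_indicator_one (measurableSet_crossingSet lam e), smul_eq_mul, mul_comm]
  · exact (integrable_const _).indicator (measurableSet_le_abs lam)
  · exact ((integrable_const 1).indicator (measurableSet_crossingSet lam e)).const_mul _

lemma integral_sugarSummand_sq_le_measureReal_crossingSet (he : 0 < e) (he2 : e < 2 * lam)
    (μ : Measure ℝ) [IsProbabilityMeasure μ] :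
    ∫ y, sugarSummand lam σ e y ^ 2 ∂μ
      ≤ 8 * lam ^ 2 + 2 * (2 * σ ^ 2 / e) ^ 2 * μ.real (crossingSet lam e) := by
  have hI : Integrable ((crossingSet lam e).indicator 1) μ :=
    (integrable_const (1 : ℝ)).indicator (measurableSet_crossingSet lam e)
  calc ∫ y, sugarSummand lam σ e y ^ 2 ∂μ
      ≤ ∫ y, (8 * lam ^ 2 + 2 * (2 * σ ^ 2 / e) ^ 2 * (crossingSet lam e).indicator 1 y) ∂μ :=
        integral_mono ((memLp_sugarSummand he he2 μ).integrable_sq)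
          ((integrable_const _).add (hI.const_mul _)) (sugarSummand_sq_le he he2)
    _ = 8 * lam ^ 2 + 2 * (2 * σ ^ 2 / e) ^ 2 * μ.real (crossingSet lam e) := by
        rw [integral_add (integrable_const _) (hI.const_mul _), integral_const, integral_const_mul,
          integral_indicator_one (measurableSet_crossingSet lam e)]
        simp

lemma riskDerivSummand_eq (hσ : 0 < σ) (m : ℝ) :
    riskDerivSummand lam σ m
      = 2 * lam * (gaussianReal m ⟨σ ^ 2, sq_nonneg σ⟩).real {t | lam < |t|}
        - 2 * σ ^ 2 * (gaussianPDFReal m ⟨σ ^ 2, sq_nonneg σ⟩ (-lam)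
          + gaussianPDFReal m ⟨σ ^ 2, sq_nonneg σ⟩ lam) := by
  have hconst : σ * √(2 / π) = 2 * σ ^ 2 * (√(2 * π * σ ^ 2))⁻¹ := by
    have hs2 : √2 * √2 = 2 := mul_self_sqrt zero_le_two
    rw [sqrt_mul (by positivity), sqrt_sq hσ.le, sqrt_mul zero_le_two, sqrt_div zero_le_two]
    field_simp
    linear_combination hs2
  rw [riskDerivSummand, gaussianPDFReal_sq_def, gaussianPDFReal_sq_def, hconst,
    show (-lam - m) ^ 2 = (m + lam) ^ 2 by ring, show (lam - m) ^ 2 = (m - lam) ^ 2 by ring]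
  ring

lemma abs_integral_sugarSummand_sub_riskDerivSummand_le (hσ : 0 < σ) (he : 0 < e)
    (he2 : e < 2 * lam) (m : ℝ) :
    |∫ y, sugarSummand lam σ e y ∂gaussianReal m ⟨σ ^ 2, sq_nonneg σ⟩ - riskDerivSummand lam σ m|
      ≤ 4 * e := by
  have hv := sq_nnreal_ne_zero hσ.ne'
  rw [integral_sugarSummand he he2, riskDerivSummand_eq hσ, gaussianReal_real_le_abs_eq_lt_abs hv,
    gaussianReal_real_crossingSet hv m he2]
  set ν := gaussianReal m ⟨σ ^ 2, sq_nonneg σ⟩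
  set φ := gaussianPDFReal m ⟨σ ^ 2, sq_nonneg σ⟩
  have h₁ := abs_gaussianReal_real_Ioc_sub_le hσ m (-lam) he.le
  have h₂ := abs_gaussianReal_real_Ioc_sub_le hσ m lam he.le
  calc |2 * lam * ν.real {t | lam < |t|}
          - 2 * σ ^ 2 / e * (ν.real (Ioc (-lam - e) (-lam)) + ν.real (Ioc (lam - e) lam))
          - (2 * lam * ν.real {t | lam < |t|} - 2 * σ ^ 2 * (φ (-lam) + φ lam))|
      = |-(2 * σ ^ 2 / e) * ((ν.real (Ioc (-lam - e) (-lam)) - e * φ (-lam))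
          + (ν.real (Ioc (lam - e) lam) - e * φ lam))| := by
        congr 1
        field_simp
        ring
    _ = 2 * σ ^ 2 / e * |(ν.real (Ioc (-lam - e) (-lam)) - e * φ (-lam))
          + (ν.real (Ioc (lam - e) lam) - e * φ lam)| := by
        rw [abs_mul, abs_neg, abs_of_pos (by positivity)]
    _ ≤ 2 * σ ^ 2 / e * ((σ ^ 2)⁻¹ * e ^ 2 + (σ ^ 2)⁻¹ * e ^ 2) := by
        gcongr
        exact (abs_add_le _ _).trans (add_le_add h₁ h₂)
    _ = 4 * e := by field_simp; ring

lemma integral_sugarSummand_sq_gaussianReal_le (hσ : 0 < σ) (he : 0 < e) (he2 : e < 2 * lam)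
    (m : ℝ) :
    ∫ y, sugarSummand lam σ e y ^ 2 ∂gaussianReal m ⟨σ ^ 2, sq_nonneg σ⟩
      ≤ 8 * lam ^ 2 + 16 * σ ^ 3 / e := by
  have hcross : (gaussianReal m ⟨σ ^ 2, sq_nonneg σ⟩).real (crossingSet lam e) ≤ 2 * (σ⁻¹ * e) := by
    rw [gaussianReal_real_crossingSet (sq_nnreal_ne_zero hσ.ne') m he2, two_mul]
    exact add_le_add (gaussianReal_real_Ioc_le hσ m _ he.le) (gaussianReal_real_Ioc_le hσ m _ he.le)
  calc _ ≤ _ := integral_sugarSummand_sq_le_measureReal_crossingSet he he2 _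
    _ ≤ 8 * lam ^ 2 + 2 * (2 * σ ^ 2 / e) ^ 2 * (2 * (σ⁻¹ * e)) := by gcongr
    _ = 8 * lam ^ 2 + 16 * σ ^ 3 / e := by field_simp; ring

end Moments

section Chebyshev

lemma measure_le_abs_sub_le_of_abs_integral_sub_le {Ω : Type*} [MeasurableSpace Ω]
    {μ : Measure Ω} [IsFiniteMeasure μ] {S : Ω → ℝ} (hS : MemLp S 2 μ) {R c : ℝ} (hc : 0 < c)
    (hbias : |μ[S] - R| ≤ c / 2) :
    μ {ω | c ≤ |S ω - R|} ≤ ENNReal.ofReal (4 * variance S μ / c ^ 2) :=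
  calc μ {ω | c ≤ |S ω - R|} ≤ μ {ω | c / 2 ≤ |S ω - μ[S]|} := by
        refine measure_mono fun ω (hω : c ≤ |S ω - R|) ↦ ?_
        show c / 2 ≤ |S ω - μ[S]|
        linarith [abs_sub_le (S ω) (μ[S]) R]
    _ ≤ ENNReal.ofReal (variance S μ / (c / 2) ^ 2) :=
        meas_ge_le_variance_div_sq hS (by positivity)
    _ = ENNReal.ofReal (4 * variance S μ / c ^ 2) := by congr 1; field_simp; ring

lemma measure_pi_le_abs_sum_sub_le {ι : Type*} [Fintype ι] {Ω : ι → Type*}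
    [∀ i, MeasurableSpace (Ω i)] (μ : ∀ i, Measure (Ω i)) [∀ i, IsProbabilityMeasure (μ i)]
    {X : ∀ i, Ω i → ℝ} (hX : ∀ i, MemLp (X i) 2 (μ i)) (r : ι → ℝ) {b V c : ℝ} (hc : 0 < c)
    (hbias : ∀ i, |∫ x, X i x ∂μ i - r i| ≤ b) (hV : ∀ i, ∫ x, X i x ^ 2 ∂μ i ≤ V)
    (hbc : Fintype.card ι * b ≤ c / 2) :
    Measure.pi μ {ω | c ≤ |∑ i, X i (ω i) - ∑ i, r i|}
      ≤ ENNReal.ofReal (4 * (Fintype.card ι * V) / c ^ 2) := by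
  set S : (∀ i, Ω i) → ℝ := ∑ i, fun ω ↦ X i (ω i)
  have hS_apply (ω : ∀ i, Ω i) : S ω = ∑ i, X i (ω i) := Finset.sum_apply ..
  have hXω (i : ι) : MemLp (fun ω : ∀ i, Ω i ↦ X i (ω i)) 2 (Measure.pi μ) :=
    (hX i).comp_measurePreserving (measurePreserving_eval μ i)
  have hmean : (Measure.pi μ)[S] = ∑ i, ∫ x, X i x ∂μ i := by
    simp_rw [hS_apply]
    rw [integral_finsetSum _ fun i _ ↦ (hXω i).integrable one_le_two]
    exact Finset.sum_congr rfl fun i _ ↦ integral_comp_eval (hX i).aestronglyMeasurable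
  have hbias' : |(Measure.pi μ)[S] - ∑ i, r i| ≤ c / 2 := by
    rw [hmean, ← Finset.sum_sub_distrib]
    refine (Finset.abs_sum_le_sum_abs _ _).trans ((Finset.sum_le_sum fun i _ ↦ hbias i).trans ?_)
    simpa using hbc
  have hvar : variance S (Measure.pi μ) ≤ Fintype.card ι * V := by
    rw [variance_sum_pi hX]
    refine (Finset.sum_le_sum fun i _ ↦
      (variance_le_expectation_sq (hX i).aestronglyMeasurable).trans (hV i)).trans ?_
    simp
  calc Measure.pi μ {ω | c ≤ |∑ i, X i (ω i) - ∑ i, r i|}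
      = Measure.pi μ {ω | c ≤ |S ω - ∑ i, r i|} := by simp_rw [hS_apply]
    _ ≤ ENNReal.ofReal (4 * variance S (Measure.pi μ) / c ^ 2) :=
        measure_le_abs_sub_le_of_abs_integral_sub_le (memLp_finsetSum' _ fun i _ ↦ hXω i) hc
          hbias'
    _ ≤ ENNReal.ofReal (4 * (Fintype.card ι * V) / c ^ 2) := by gcongr

end Chebyshev

lemma sum_sugarSummand {ι : Type*} (s : Finset ι) (lam σ e : ℝ) (y : ι → ℝ) :
    ∑ i ∈ s, sugarSummand lam σ e (y i)
      = 2 * ∑ i ∈ s, hST lam (y i) * (softThresh (y i) lam - y i)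
        + 2 * σ ^ 2 / e * ∑ i ∈ s, (hST lam (y i + e) - hST lam (y i)) := by
  simp only [sugarSummand, Finset.mul_sum, Finset.sum_add_distrib, mul_assoc]

lemma sum_riskDerivSummand {ι : Type*} (s : Finset ι) (lam σ : ℝ) (m : ι → ℝ) :
    ∑ i ∈ s, riskDerivSummand lam σ (m i)
      = 2 * lam * ∑ i ∈ s, (gaussianReal (m i) ⟨σ ^ 2, sq_nonneg σ⟩).real {t | lam < |t|}
        - σ * √(2 / π) * ∑ i ∈ s,
          (exp (-(m i + lam) ^ 2 / (2 * σ ^ 2)) + exp (-(m i - lam) ^ 2 / (2 * σ ^ 2))) := by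
  simp only [riskDerivSummand, Finset.mul_sum, Finset.sum_sub_distrib]

lemma tendsto_chebyshev_bound {ε : ℕ → ℝ} (hε : ∀ n, ε n ≠ 0)
    (hPε : Tendsto (fun n : ℕ ↦ (n : ℝ) * ε n) atTop atTop) (A B : ℝ) {η : ℝ} (hη : η ≠ 0) :
    Tendsto (fun n : ℕ ↦ 4 * (n * (A + B / ε n)) / (n * η) ^ 2) atTop (𝓝 0) := by
  have h := ((tendsto_inv_atTop_zero.comp tendsto_natCast_atTop_atTop).const_mul
    (4 * A / η ^ 2)).add ((tendsto_inv_atTop_zero.comp hPε).const_mul (4 * B / η ^ 2))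
  rw [mul_zero, mul_zero, add_zero] at h
  refine h.congr' ((eventually_gt_atTop 0).mono fun n hn ↦ ?_)
  have hn' : (n : ℝ) ≠ 0 := Nat.cast_ne_zero.mpr hn.ne'
  have hεn := hε n
  simp only [Function.comp_apply]
  field_simp

/-- **Consistency of SUGAR for soft-thresholding** (Theorem 2).  With
`Y^{(P)} ~ ⊗_i N((μ0^{(P)})_i, σ²)`, a finite-difference step `ε(P) → 0` with
`P ε(P) → ∞`, the SUGAR estimator
`SUGAR_P(y) = 2 Σ_i h(y_i)(ST(y_i,λ) - y_i) + (2σ²/ε(P)) Σ_i (h(y_i + ε(P)) - h(y_i))`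
and the risk derivative
`R'_P = 2λ Σ_i P(|Y_i| > λ) - σ√(2/π) Σ_i [exp(-((μ0)_i+λ)²/(2σ²)) + exp(-((μ0)_i-λ)²/(2σ²))]`
satisfy, for every `η > 0`,
`P(|(1/P)(SUGAR_P(Y^{(P)}) - R'_P)| ≥ η) → 0` as `P → ∞`. -/
theorem sugar_consistency_soft_thresholding
    (lam σ : ℝ) (hlam : 0 < lam) (hσ : 0 < σ)
    (μ0 : (n : ℕ) → Fin n → ℝ)
    (ε : ℕ → ℝ) (hεpos : ∀ n, 0 < ε n)
    (hε0 : Tendsto ε atTop (𝓝 0))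
    (hPε : Tendsto (fun n : ℕ => (n : ℝ) * ε n) atTop atTop)
    (η : ℝ) (hη : 0 < η) :
    Tendsto (fun n : ℕ =>
        (Measure.pi fun i : Fin n => gaussianReal (μ0 n i) ⟨σ ^ 2, sq_nonneg σ⟩)
          {y : Fin n → ℝ | η ≤
            |(1 / (n : ℝ)) *
              ((2 * ∑ i : Fin n, hST lam (y i) * (softThresh (y i) lam - y i)
                  + (2 * σ ^ 2 / ε n) * ∑ i : Fin n, (hST lam (y i + ε n) - hST lam (y i)))
                - (2 * lam * ∑ i : Fin n,
                      ((gaussianReal (μ0 n i) ⟨σ ^ 2, sq_nonneg σ⟩) {t : ℝ | lam < |t|}).toReal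
                    - σ * Real.sqrt (2 / Real.pi) * ∑ i : Fin n,
                        (Real.exp (-(μ0 n i + lam) ^ 2 / (2 * σ ^ 2))
                          + Real.exp (-(μ0 n i - lam) ^ 2 / (2 * σ ^ 2)))))|})
      atTop (𝓝 0) := by
  have hlim := tendsto_chebyshev_bound (fun n ↦ (hεpos n).ne') hPε (8 * lam ^ 2) (16 * σ ^ 3)
    hη.ne'
  refine tendsto_of_tendsto_of_tendsto_of_le_of_le' tendsto_const_nhds
    (ENNReal.ofReal_zero ▸ ENNReal.tendsto_ofReal hlim) (Eventually.of_forall fun _ ↦ bot_le) ?_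
  filter_upwards [hε0.eventually_lt_const (by positivity : 0 < 2 * lam),
    hε0.eventually_le_const (by positivity : 0 < η / 8), eventually_gt_atTop 0]
    with n hε2 hεη hn
  have hn' : (0 : ℝ) < n := Nat.cast_pos.mpr hn
  -- Chebyshev for the sum of the SUGAR summands, with bias `≤ 4 n ε n ≤ n η / 2`
  have key := measure_pi_le_abs_sum_sub_le _ (fun _ ↦ memLp_sugarSummand (hεpos n) hε2 _)
    (fun i ↦ riskDerivSummand lam σ (μ0 n i)) (mul_pos hn' hη)
    (fun i ↦ abs_integral_sugarSummand_sub_riskDerivSummand_le hσ (hεpos n) hε2 (μ0 n i))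
    (fun i ↦ integral_sugarSummand_sq_gaussianReal_le hσ (hεpos n) hε2 (μ0 n i))
    (by rw [Fintype.card_fin]; nlinarith)
  rw [Fintype.card_fin] at key
  refine Eq.trans_le (congrArg _ (Set.ext fun y ↦ ?_)) key
  change η ≤ _ ↔ (n : ℝ) * η ≤ _
  rw [sum_sugarSummand, sum_riskDerivSummand, abs_mul, abs_of_pos (by positivity), one_div,
    inv_mul_eq_div, le_div_iff₀ hn', mul_comm]
  rfl
end
end

section
/- Let λ > 0, σ > 0, μ0 ∈ ℝ^P, and let Y have independent coordinates Y_i ~ N((μ0)_i, σ²). Define h : ℝ → ℝ by h(t) = 1 if t ≤ −λ, 0 if −λ < t < λ, −1 if t ≥ λ. Then lim_{ε→0⁺} E[ (1/ε) Σ_{i=1}^P (h(Y_i + ε) − h(Y_i)) ] = −(1/(√(2π) σ)) Σ_{i=1}^P [ exp(−((μ0)_i + λ)²/(2σ²)) + exp(−((μ0)_i − λ)²/(2σ²)) ]. -/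
open MeasureTheory ProbabilityTheory Filter
open scoped BigOperators Topology

noncomputable section

/-!
For `λ > 0` and `ε ≥ 0`, `h(t + ε) - h(t)` is minus the indicator of the two windows
`(-λ - ε, -λ]` and `[λ - ε, λ)`. So the expected difference quotient of one coordinate is minus
the Gaussian mass of these windows divided by `ε`, which tends to `-(φ(-λ) + φ(λ))` (`φ` the
Gaussian density) by the fundamental theorem of calculus. Under the product measure the
expectation of the coordinate sum splits into the sum of the one-dimensional expectations.
-/

open Set Real

variable {lam ε : ℝ}

lemma hST_add_sub_hST_s10 (hlam : 0 < lam) (hε : 0 ≤ ε) :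
    (fun t => hST lam (t + ε) - hST lam t)
      = -((Ioc (-lam - ε) (-lam)).indicator 1 + (Ico (lam - ε) lam).indicator 1) := by
  funext t
  simp only [hST, Pi.neg_apply, Pi.add_apply, indicator_apply, mem_Ioc, mem_Ico, Pi.one_apply]
  split_ifs <;> grind

lemma integrable_hST_add_sub_hST (μ : Measure ℝ) [IsFiniteMeasure μ] (hlam : 0 < lam)
    (hε : 0 ≤ ε) : Integrable (fun t => hST lam (t + ε) - hST lam t) μ := by
  rw [hST_add_sub_hST_s10 hlam hε]
  exact ((integrable_const 1).indicator measurableSet_Ioc).add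
    ((integrable_const 1).indicator measurableSet_Ico) |>.neg

lemma integral_hST_add_sub_hST (μ : Measure ℝ) [IsFiniteMeasure μ] (hlam : 0 < lam)
    (hε : 0 ≤ ε) :
    ∫ t, (hST lam (t + ε) - hST lam t) ∂μ
      = -(μ.real (Ioc (-lam - ε) (-lam)) + μ.real (Ico (lam - ε) lam)) := by
  rw [hST_add_sub_hST_s10 hlam hε, Pi.neg_def, integral_neg, Pi.add_def,
    integral_add ((integrable_const 1).indicator measurableSet_Ioc)
      ((integrable_const 1).indicator measurableSet_Ico),
    integral_indicator_one measurableSet_Ioc, integral_indicator_one measurableSet_Ico]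

lemma gaussianReal_real_Ioc (m : ℝ) {v : NNReal} (hv : v ≠ 0) {a b : ℝ} (hab : a ≤ b) :
    (gaussianReal m v).real (Ioc a b) = ∫ x in a..b, gaussianPDFReal m v x := by
  rw [measureReal_def, gaussianReal_apply_eq_integral m hv, intervalIntegral.integral_of_le hab,
    ENNReal.toReal_ofReal (setIntegral_nonneg measurableSet_Ioc
      fun x _ => gaussianPDFReal_nonneg m v x)]

lemma gaussianReal_real_Ico (m : ℝ) {v : NNReal} (hv : v ≠ 0) {a b : ℝ} (hab : a ≤ b) :
    (gaussianReal m v).real (Ico a b) = ∫ x in a..b, gaussianPDFReal m v x := by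
  rw [measureReal_def, gaussianReal_apply_eq_integral m hv, integral_Ico_eq_integral_Ioc,
    ← gaussianReal_apply_eq_integral m hv, ← measureReal_def, gaussianReal_real_Ioc m hv hab]

lemma tendsto_inv_mul_intervalIntegral_sub_left {f : ℝ → ℝ} (hf : Continuous f) (a : ℝ) :
    Tendsto (fun ε => ε⁻¹ * ∫ x in (a - ε)..a, f x) (𝓝[>] 0) (𝓝 (f a)) := by
  have hF : HasDerivAt (fun u => ∫ x in a..u, f x) (f a) a :=
    intervalIntegral.integral_hasDerivAt_right (hf.intervalIntegrable _ _)
      (hf.stronglyMeasurableAtFilter _ _) hf.continuousAt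
  have h := hF.tendsto_slope_zero_left.comp (neg_zero (G := ℝ) ▸ tendsto_neg_nhdsGT_neg)
  refine h.congr fun ε => ?_
  simp only [Function.comp_apply, smul_eq_mul, intervalIntegral.integral_same, sub_zero,
    ← sub_eq_add_neg, intervalIntegral.integral_symm a (a - ε), inv_neg, neg_mul, mul_neg]

lemma tendsto_inv_mul_integral_hST_add_sub_hST_gaussianReal (hlam : 0 < lam) (m : ℝ)
    {v : NNReal} (hv : v ≠ 0) :
    Tendsto (fun ε => (1 / ε) * ∫ x, (hST lam (x + ε) - hST lam x) ∂gaussianReal m v)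
      (𝓝[>] 0) (𝓝 (-(gaussianPDFReal m v (-lam) + gaussianPDFReal m v lam))) := by
  have hcont : Continuous (gaussianPDFReal m v) := by rw [gaussianPDFReal_def]; fun_prop
  refine ((tendsto_inv_mul_intervalIntegral_sub_left hcont (-lam)).add
    (tendsto_inv_mul_intervalIntegral_sub_left hcont lam)).neg.congr' ?_
  filter_upwards [self_mem_nhdsWithin] with ε (hε : 0 < ε)
  rw [integral_hST_add_sub_hST _ hlam hε.le, gaussianReal_real_Ioc m hv (by linarith),
    gaussianReal_real_Ico m hv (by linarith)]
  ring

lemma integral_sum_comp_eval {ι : Type*} [Fintype ι] {X : ι → Type*}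
    {mX : ∀ i, MeasurableSpace (X i)} {μ : (i : ι) → Measure (X i)}
    [∀ i, IsProbabilityMeasure (μ i)] {E : Type*} [NormedAddCommGroup E] [NormedSpace ℝ E]
    {g : (i : ι) → X i → E} (hg : ∀ i, Integrable (g i) (μ i)) :
    ∫ y, ∑ i, g i (y i) ∂Measure.pi μ = ∑ i, ∫ x, g i x ∂μ i := by
  rw [integral_finsetSum _ fun i _ => integrable_comp_eval (hg i)]
  exact Finset.sum_congr rfl fun i _ => integral_comp_eval (hg i).aestronglyMeasurable

lemma gaussianPDFReal_of_coe_eq_sq {σ : ℝ} (hσ : 0 < σ) {v : NNReal} (hv : (v : ℝ) = σ ^ 2)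
    (m x : ℝ) :
    gaussianPDFReal m v x = 1 / (√(2 * π) * σ) * exp (-(x - m) ^ 2 / (2 * σ ^ 2)) := by
  rw [gaussianPDFReal_def, hv, sqrt_mul (by positivity), sqrt_sq hσ.le, one_div]

/-- **Asymptotic unbiasedness of the DOF gradient estimator for soft-thresholding.**
For independent `Y_i ~ N((μ0)_i, σ²)` and `λ > 0`,
`lim_{ε→0⁺} E[(1/ε) Σ_i (h(Y_i + ε) - h(Y_i))]
  = -(1/(√(2π) σ)) Σ_i [exp(-((μ0)_i + λ)²/(2σ²)) + exp(-((μ0)_i - λ)²/(2σ²))]`. -/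
theorem fd_dof_gradient_limit
    {P : ℕ} (lam σ : ℝ) (hlam : 0 < lam) (hσ : 0 < σ) (μ0 : Fin P → ℝ) :
    Tendsto (fun ε : ℝ =>
        ∫ y : Fin P → ℝ, (1 / ε) * ∑ i : Fin P, (hST lam (y i + ε) - hST lam (y i))
          ∂(Measure.pi fun i => gaussianReal (μ0 i) ⟨σ ^ 2, sq_nonneg σ⟩))
      (𝓝[>] (0 : ℝ))
      (𝓝 (-(1 / (Real.sqrt (2 * Real.pi) * σ)) * ∑ i : Fin P,
        (Real.exp (-(μ0 i + lam) ^ 2 / (2 * σ ^ 2))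
          + Real.exp (-(μ0 i - lam) ^ 2 / (2 * σ ^ 2))))) := by
  set v : NNReal := ⟨σ ^ 2, sq_nonneg σ⟩
  have hv_sq : (v : ℝ) = σ ^ 2 := rfl
  have hv : v ≠ 0 := by simpa [← NNReal.coe_ne_zero, hv_sq] using hσ.ne'
  have hlim := tendsto_finsetSum Finset.univ fun i _ =>
    tendsto_inv_mul_integral_hST_add_sub_hST_gaussianReal hlam (μ0 i) hv
  have hrhs : ∀ i, -(gaussianPDFReal (μ0 i) v (-lam) + gaussianPDFReal (μ0 i) v lam)
      = -(1 / (√(2 * π) * σ)) * (exp (-(μ0 i + lam) ^ 2 / (2 * σ ^ 2))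
        + exp (-(μ0 i - lam) ^ 2 / (2 * σ ^ 2))) := fun i => by
    rw [gaussianPDFReal_of_coe_eq_sq hσ hv_sq, gaussianPDFReal_of_coe_eq_sq hσ hv_sq,
      neg_sub_left, neg_sq, ← neg_sub (μ0 i), neg_sq]
    ring
  simp only [hrhs, ← Finset.mul_sum] at hlim
  refine hlim.congr' ?_
  filter_upwards [self_mem_nhdsWithin] with ε (hε : 0 < ε)
  rw [integral_const_mul, integral_sum_comp_eval (g := fun _ t => hST lam (t + ε) - hST lam t)
    fun _ => integrable_hST_add_sub_hST _ hlam hε.le, Finset.mul_sum]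
end
end

section
/- Let σ > 0, μ0 ∈ ℝ^P, and let Y have independent coordinates Y_i ~ N((μ0)_i, σ²). Let ST(t,λ) = t+λ if t ≤ −λ, 0 if −λ < t < λ, t−λ if t ≥ λ. Then the risk λ ↦ Σ_{i=1}^P E[(ST(Y_i, λ) − (μ0)_i)²] is differentiable at every λ > 0, with derivative 2λ Σ_{i=1}^P P(|Y_i| > λ) − σ√(2/π) Σ_{i=1}^P [ exp(−((μ0)_i + λ)²/(2σ²)) + exp(−((μ0)_i − λ)²/(2σ²)) ]. -/
open MeasureTheory ProbabilityTheory
open scoped BigOperators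

noncomputable section

/-!
Away from `|t| = λ` the loss `λ ↦ (ST(t, λ) - c)²` is differentiable, with derivative
`2 (t + λ - c)` for `t < -λ`, `-2 (t - λ - c)` for `t > λ` and `0` in between, and on `λ ≥ 0` it is
Lipschitz with constant `2|t| + 2|c|`. Dominated differentiation therefore gives, for any atomless
law with a finite second moment, `R'(λ) = 2 E[Y + λ - c; Y < -λ] - 2 E[Y - λ - c; Y > λ]`.
For a Gaussian law and `c = μ`, the truncated first moments are boundary terms:
`E[Y - μ; Y > a] = σ² φ(a)` because `σ² φ' = -(x - μ) φ`, and `E[Y - μ; Y < a] = -σ² φ(a)`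
because `Y - μ` is centred. Finally `2σ² φ(a) = σ √(2/π) exp(-(a - μ)²/(2σ²))`.
-/

open Set Filter Topology
open scoped NNReal

lemma abs_softThresh_le {t l : ℝ} (hl : 0 ≤ l) : |softThresh t l| ≤ |t| := by
  unfold softThresh
  split_ifs <;> rw [abs_le] <;> constructor <;> linarith [le_abs_self t, neg_abs_le t]

lemma lipschitzOnWith_softThresh (t : ℝ) : LipschitzOnWith 1 (softThresh t) (Ici 0) := by
  refine LipschitzOnWith.of_dist_le_mul fun a ha b hb => ?_
  rw [mem_Ici] at ha hb
  simp only [NNReal.coe_one, one_mul, Real.dist_eq]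
  unfold softThresh
  split_ifs <;> rw [abs_le] <;> constructor <;> linarith [le_abs_self (a - b), neg_abs_le (a - b)]

lemma measurable_softThresh (l : ℝ) : Measurable fun t => softThresh t l :=
  Measurable.ite measurableSet_Iic (measurable_id.add_const l)
    (Measurable.ite measurableSet_Iio measurable_const (measurable_id.sub_const l))

lemma hasDerivAt_softThresh_of_lt_neg {t l : ℝ} (h : t < -l) :
    HasDerivAt (softThresh t) 1 l := by
  refine ((hasDerivAt_id l).const_add t).congr_of_eventuallyEq ?_
  filter_upwards [Iio_mem_nhds (lt_neg_of_lt_neg h)] with l' hl'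
  simp [softThresh, le_neg_of_le_neg (le_of_lt (mem_Iio.1 hl'))]

lemma hasDerivAt_softThresh_of_abs_lt {t l : ℝ} (h : |t| < l) :
    HasDerivAt (softThresh t) 0 l := by
  refine (hasDerivAt_const l 0).congr_of_eventuallyEq ?_
  filter_upwards [Ioi_mem_nhds h] with l' hl'
  rw [mem_Ioi, abs_lt] at hl'
  simp [softThresh, hl'.1, hl'.2]

lemma hasDerivAt_softThresh_of_abs_lt' {t l : ℝ} (h : |l| < t) :
    HasDerivAt (softThresh t) (-1) l := by
  refine ((hasDerivAt_id l).const_sub t).congr_of_eventuallyEq ?_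
  filter_upwards [(continuous_abs.tendsto l).eventually (Iio_mem_nhds h)] with l' hl'
  rw [abs_lt] at hl'
  have : ¬ t ≤ -l' := by linarith
  simp [softThresh, this, hl'.2.not_gt]

lemma hasDerivAt_sq_softThresh_sub (c : ℝ) {t lam : ℝ} (hlam : 0 < lam) (ht : |t| ≠ lam) :
    HasDerivAt (fun l => (softThresh t l - c) ^ 2)
      ((Iio (-lam)).indicator (fun t => 2 * (t + lam - c)) t
        - (Ioi lam).indicator (fun t => 2 * (t - lam - c)) t) lam := by
  rcases ht.lt_or_gt with hin | hout
  · refine (((hasDerivAt_softThresh_of_abs_lt hin).sub_const c).fun_pow 2).congr_deriv ?_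
    rw [abs_lt] at hin
    simp [hin.1.not_gt, hin.2.not_gt]
  rcases lt_abs.1 hout with hpos | hneg
  · have hlam' : |lam| < t := (abs_of_pos hlam).symm ▸ hpos
    refine (((hasDerivAt_softThresh_of_abs_lt' hlam').sub_const c).fun_pow 2).congr_deriv ?_
    have h₁ : ¬ t ≤ -lam := by linarith
    have h₂ : ¬ t < -lam := by linarith
    simp [softThresh, hpos, hpos.not_gt, h₁, h₂]
  · have hlt : t < -lam := by linarith
    refine (((hasDerivAt_softThresh_of_lt_neg hlt).sub_const c).fun_pow 2).congr_deriv ?_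
    have : ¬ lam < t := by linarith
    simp [softThresh, hlt, hlt.le, this]

lemma lipschitzOnWith_sq_softThresh_sub (t c : ℝ) :
    LipschitzOnWith (Real.nnabs (2 * |t| + 2 * |c|)) (fun l => (softThresh t l - c) ^ 2)
      (Ici 0) := by
  refine LipschitzOnWith.of_dist_le_mul fun a ha b hb => ?_
  have hab : |softThresh t a - softThresh t b| ≤ |a - b| := by
    simpa [Real.dist_eq] using (lipschitzOnWith_softThresh t).dist_le_mul a ha b hb
  have hsum : |softThresh t a - c + (softThresh t b - c)| ≤ 2 * |t| + 2 * |c| := by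
    have := abs_add_three (softThresh t a) (softThresh t b) (-(2 * c))
    rw [abs_neg, abs_mul, abs_two] at this
    have := abs_softThresh_le (t := t) (mem_Ici.1 ha)
    have := abs_softThresh_le (t := t) (mem_Ici.1 hb)
    rw [show softThresh t a - c + (softThresh t b - c)
      = softThresh t a + softThresh t b + -(2 * c) by ring]
    linarith
  rw [Real.coe_nnabs, abs_of_nonneg (by positivity), Real.dist_eq, Real.dist_eq, sq_sub_sq,
    abs_mul]
  exact mul_le_mul hsum (by simpa using hab) (abs_nonneg _) (by positivity)

lemma integrable_sq_softThresh_sub {ν : Measure ℝ} [IsFiniteMeasure ν] (hν : MemLp id 2 ν)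
    (c : ℝ) {l : ℝ} (hl : 0 ≤ l) : Integrable (fun t => (softThresh t l - c) ^ 2) ν := by
  refine ((hν.integrable_sq.const_mul 2).add (integrable_const (2 * c ^ 2))).mono'
    (((measurable_softThresh l).sub_const c).pow_const 2).aestronglyMeasurable
    (ae_of_all _ fun t => ?_)
  have := sq_le_sq.2 (abs_softThresh_le (t := t) hl)
  rw [Real.norm_eq_abs, abs_sq]
  simp only [id, Pi.add_apply]
  nlinarith [sq_nonneg (softThresh t l + c)]

theorem hasDerivAt_integral_sq_softThresh_sub {ν : Measure ℝ} [IsFiniteMeasure ν]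
    [NullSingletonClass ν] (hν : MemLp id 2 ν) (c : ℝ) {lam : ℝ} (hlam : 0 < lam) :
    HasDerivAt (fun l => ∫ t, (softThresh t l - c) ^ 2 ∂ν)
      (∫ t in Iio (-lam), 2 * (t + lam - c) ∂ν - ∫ t in Ioi lam, 2 * (t - lam - c) ∂ν) lam := by
  have hid : Integrable (fun t => t) ν := hν.integrable one_le_two
  have hleft : Integrable (fun t => 2 * (t + lam - c)) ν :=
    ((hid.add (integrable_const lam)).sub (integrable_const c)).const_mul 2
  have hright : Integrable (fun t => 2 * (t - lam - c)) ν :=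
    ((hid.sub (integrable_const lam)).sub (integrable_const c)).const_mul 2
  have hbound : Integrable (fun t => 2 * |t| + 2 * |c|) ν :=
    (hid.abs.const_mul 2).add (integrable_const _)
  have hnull : ∀ᵐ t ∂ν, |t| ≠ lam := by
    refine measure_mono_null (fun t ht => ?_) ((Set.toFinite {-lam, lam}).measure_zero ν)
    rcases abs_eq hlam.le |>.1 (not_not.1 ht) with h | h <;> simp [h]
  have hmeas : ∀ l, AEStronglyMeasurable (fun t => (softThresh t l - c) ^ 2) ν := fun l =>
    (((measurable_softThresh l).sub_const c).pow_const 2).aestronglyMeasurable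
  obtain ⟨-, hderiv⟩ := hasDerivAt_integral_of_dominated_loc_of_lip
    (F' := fun t => (Iio (-lam)).indicator (fun t => 2 * (t + lam - c)) t
      - (Ioi lam).indicator (fun t => 2 * (t - lam - c)) t)
    (Ioi_mem_nhds hlam) (.of_forall hmeas) (integrable_sq_softThresh_sub hν c hlam.le)
    ((hleft.indicator measurableSet_Iio).sub (hright.indicator measurableSet_Ioi)).1
    (ae_of_all _ fun t => (lipschitzOnWith_sq_softThresh_sub t c).mono Ioi_subset_Ici_self)
    hbound (hnull.mono fun t ht => hasDerivAt_sq_softThresh_sub c hlam ht)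
  rwa [integral_sub (hleft.indicator measurableSet_Iio) (hright.indicator measurableSet_Ioi),
    integral_indicator measurableSet_Iio, integral_indicator measurableSet_Ioi] at hderiv

section Gaussian

variable {μ : ℝ} {v : ℝ≥0}

lemma hasDerivAt_gaussianPDFReal (μ : ℝ) (v : ℝ≥0) (x : ℝ) :
    HasDerivAt (gaussianPDFReal μ v) (-(x - μ) / v * gaussianPDFReal μ v x) x := by
  rw [gaussianPDFReal_def]
  refine (((((hasDerivAt_id x).sub_const μ).fun_pow 2).fun_neg.div_const
    (2 * (v : ℝ))).exp.const_mul (√(2 * Real.pi * v))⁻¹).congr_deriv ?_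
  simp only [id]
  ring

lemma integrable_gaussianPDFReal_mul_iff (hv : v ≠ 0) {f : ℝ → ℝ} :
    Integrable (fun x => gaussianPDFReal μ v x * f x) ↔ Integrable f (gaussianReal μ v) := by
  rw [gaussianReal_of_var_ne_zero _ hv, integrable_withDensity_iff_integrable_smul'
    (measurable_gaussianPDF μ v) (ae_of_all _ fun _ => gaussianPDF_lt_top)]
  simp

lemma setIntegral_gaussianReal_eq_setIntegral_mul (hv : v ≠ 0) {s : Set ℝ} (hs : MeasurableSet s)
    (f : ℝ → ℝ) :
    ∫ x in s, f x ∂gaussianReal μ v = ∫ x in s, gaussianPDFReal μ v x * f x := by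
  rw [gaussianReal_of_var_ne_zero _ hv, setIntegral_withDensity_eq_setIntegral_toReal_smul
    (measurable_gaussianPDF μ v) (ae_of_all _ fun _ => gaussianPDF_lt_top) f hs]
  simp

lemma integrable_id_gaussianReal (μ : ℝ) (v : ℝ≥0) :
    Integrable (fun x => x) (gaussianReal μ v) :=
  (memLp_id_gaussianReal 1).integrable (by simp)

lemma integrable_sub_gaussianReal (μ : ℝ) (v : ℝ≥0) :
    Integrable (fun x => x - μ) (gaussianReal μ v) :=
  (integrable_id_gaussianReal μ v).sub (integrable_const μ)

lemma integral_sub_gaussianReal (μ : ℝ) (v : ℝ≥0) : ∫ x, (x - μ) ∂gaussianReal μ v = 0 := by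
  rw [integral_sub (integrable_id_gaussianReal μ v) (integrable_const μ),
    integral_id_gaussianReal]
  simp

lemma setIntegral_Ioi_sub_gaussianReal (hv : v ≠ 0) (a : ℝ) :
    ∫ x in Ioi a, (x - μ) ∂gaussianReal μ v = v * gaussianPDFReal μ v a := by
  have hderiv : ∀ x, HasDerivAt (fun x => -(v * gaussianPDFReal μ v x))
      (gaussianPDFReal μ v x * (x - μ)) x := fun x => by
    refine ((hasDerivAt_gaussianPDFReal μ v x).const_mul (v : ℝ)).fun_neg.congr_deriv ?_
    field_simp
  have hint : Integrable (fun x => gaussianPDFReal μ v x * (x - μ)) :=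
    (integrable_gaussianPDFReal_mul_iff hv).2 (integrable_sub_gaussianReal μ v)
  have hlim := tendsto_zero_of_hasDerivAt_of_integrableOn_Ioi (a := a) (fun x _ => hderiv x)
    hint.integrableOn ((integrable_gaussianPDFReal μ v).const_mul (v : ℝ)).neg.integrableOn
  rw [setIntegral_gaussianReal_eq_setIntegral_mul hv measurableSet_Ioi,
    integral_Ioi_of_hasDerivAt_of_tendsto' (fun x _ => hderiv x) hint.integrableOn hlim]
  ring

lemma setIntegral_Iio_sub_gaussianReal (hv : v ≠ 0) (a : ℝ) :
    ∫ x in Iio a, (x - μ) ∂gaussianReal μ v = -(v * gaussianPDFReal μ v a) := by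
  have := nullSingletonClass_gaussianReal (μ := μ) hv
  have hsplit := integral_add_compl measurableSet_Iio (integrable_sub_gaussianReal μ v) (s := Iio a)
  rw [compl_Iio, ← setIntegral_congr_set Ioi_ae_eq_Ici, setIntegral_Ioi_sub_gaussianReal hv,
    integral_sub_gaussianReal] at hsplit
  linarith

end Gaussian

lemma measureReal_setOf_lt_abs {ν : Measure ℝ} [IsFiniteMeasure ν] {lam : ℝ} (hlam : 0 ≤ lam) :
    ν.real {t | lam < |t|} = ν.real (Iio (-lam)) + ν.real (Ioi lam) := by
  have hset : {t : ℝ | lam < |t|} = Iio (-lam) ∪ Ioi lam := by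
    ext t
    change lam < |t| ↔ t < -lam ∨ lam < t
    rw [← lt_neg (a := lam) (b := t), or_comm]
    exact lt_abs
  rw [hset, measureReal_union
    ((Iic_disjoint_Ioi (by linarith)).mono_left Iio_subset_Iic_self) measurableSet_Ioi]

theorem hasDerivAt_integral_sq_softThresh_sub_gaussianReal (μ : ℝ) {v : ℝ≥0} (hv : v ≠ 0)
    {lam : ℝ} (hlam : 0 < lam) :
    HasDerivAt (fun l => ∫ t, (softThresh t l - μ) ^ 2 ∂gaussianReal μ v)
      (2 * lam * (gaussianReal μ v).real {t | lam < |t|}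
        - 2 * v * (gaussianPDFReal μ v (-lam) + gaussianPDFReal μ v lam)) lam := by
  have := nullSingletonClass_gaussianReal (μ := μ) hv
  refine (hasDerivAt_integral_sq_softThresh_sub (memLp_id_gaussianReal' 2 (by simp)) μ
    hlam).congr_deriv ?_
  have hshift : ∀ (s : Set ℝ) (b : ℝ), ∫ t in s, 2 * (t + b - μ) ∂gaussianReal μ v
      = 2 * ∫ t in s, (t - μ) ∂gaussianReal μ v + 2 * b * (gaussianReal μ v).real s := by
    intro s b
    have hrw : ∀ t, t + b - μ = (t - μ) + b := fun t => by ring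
    simp only [hrw]
    rw [integral_const_mul, integral_add (integrable_sub_gaussianReal μ v).integrableOn
      (integrable_const b), setIntegral_const, smul_eq_mul]
    ring
  have hneg : ∀ t, t - lam - μ = t + -lam - μ := fun t => by ring
  simp only [hneg, hshift, setIntegral_Iio_sub_gaussianReal hv, setIntegral_Ioi_sub_gaussianReal hv,
    measureReal_setOf_lt_abs hlam.le]
  ring

lemma two_mul_mul_gaussianPDFReal_of_coe_eq_sq {σ : ℝ} (hσ : 0 < σ) {v : ℝ≥0}
    (hv : (v : ℝ) = σ ^ 2) (μ a : ℝ) :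
    2 * v * gaussianPDFReal μ v a = σ * √(2 / Real.pi) * Real.exp (-(μ - a) ^ 2 / (2 * σ ^ 2)) := by
  have hπ : 0 < √Real.pi := Real.sqrt_pos.2 Real.pi_pos
  rw [gaussianPDFReal_def, hv, Real.sqrt_mul (by positivity), Real.sqrt_sq hσ.le,
    Real.sqrt_mul zero_le_two, Real.sqrt_div zero_le_two, ← neg_sub, neg_sq]
  field_simp
  exact (Real.sq_sqrt zero_le_two).symm

/-- **Derivative of the soft-thresholding risk.**  For independent `Y_i ~ N((μ0)_i, σ²)`,
the risk `λ ↦ Σ_i E[(ST(Y_i, λ) - (μ0)_i)²]` is differentiable at every `λ > 0` with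
derivative `2λ Σ_i P(|Y_i| > λ)
  - σ√(2/π) Σ_i [exp(-((μ0)_i + λ)²/(2σ²)) + exp(-((μ0)_i - λ)²/(2σ²))]`. -/
theorem soft_thresholding_risk_hasDerivAt
    {P : ℕ} (σ : ℝ) (hσ : 0 < σ) (μ0 : Fin P → ℝ) (lam : ℝ) (hlam : 0 < lam) :
    HasDerivAt
      (fun l : ℝ => ∑ i : Fin P,
        ∫ t : ℝ, (softThresh t l - μ0 i) ^ 2 ∂(gaussianReal (μ0 i) ⟨σ ^ 2, sq_nonneg σ⟩))
      (2 * lam * ∑ i : Fin P,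
          ((gaussianReal (μ0 i) ⟨σ ^ 2, sq_nonneg σ⟩) {t : ℝ | lam < |t|}).toReal
        - σ * Real.sqrt (2 / Real.pi) * ∑ i : Fin P,
            (Real.exp (-(μ0 i + lam) ^ 2 / (2 * σ ^ 2))
              + Real.exp (-(μ0 i - lam) ^ 2 / (2 * σ ^ 2))))
      lam := by
  set v : ℝ≥0 := ⟨σ ^ 2, sq_nonneg σ⟩
  have hv : v ≠ 0 := fun h => (pow_pos hσ 2).ne' (congrArg NNReal.toReal h)
  have hpdf := two_mul_mul_gaussianPDFReal_of_coe_eq_sq hσ (v := v) rfl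
  refine (HasDerivAt.fun_sum (u := Finset.univ) fun i _ =>
    hasDerivAt_integral_sq_softThresh_sub_gaussianReal (μ0 i) hv hlam).congr_deriv ?_
  rw [Finset.mul_sum, Finset.mul_sum, ← Finset.sum_sub_distrib]
  refine Finset.sum_congr rfl fun i _ => ?_
  rw [mul_add, hpdf, hpdf, sub_neg_eq_add, measureReal_def]
  ring
end
end

section
/- Let E be a finite-dimensional real inner product space and C ⊆ E a compact convex set with 0 in its interior, and let G = gauge C be its gauge (Minkowski functional). Then there exists a constant L > 0, independent of y, such that for all θ > 0, θ' > 0 and all y ∈ E, if p minimizes z ↦ (1/2)‖z − y‖² + θ·G(z) over E and p' minimizes z ↦ (1/2)‖z − y‖² + θ'·G(z) over E, then ‖p − p'‖ ≤ L·|θ − θ'|. In other words, for every y the map θ ↦ Prox_{θG}(y) is Lipschitz continuous on (0,∞) with a constant independent of y. -/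
noncomputable section

/-- Strong convexity step: if `p` minimizes `z ↦ (1/2)‖z-y‖² + θ G z` for a convex
nonneg-homog `G`, then the gap at any `q` dominates `(1/4)‖p-q‖²`. -/
lemma strong_min_gap {E : Type*} [NormedAddCommGroup E] [InnerProductSpace ℝ E]
    (C : Set E) (hconv : Convex ℝ C) (habs : Absorbent ℝ C)
    (θ : ℝ) (hθ : 0 ≤ θ) (y p q : E)
    (hp : ∀ z : E, (1 / 2) * ‖p - y‖ ^ 2 + θ * gauge C p
          ≤ (1 / 2) * ‖z - y‖ ^ 2 + θ * gauge C z) :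
    (1/4) * ‖p - q‖ ^ 2 + ((1 / 2) * ‖p - y‖ ^ 2 + θ * gauge C p)
      ≤ (1 / 2) * ‖q - y‖ ^ 2 + θ * gauge C q := by
  have hm := hp ((1/2 : ℝ) • (p + q))
  have hpar := parallelogram_law_with_norm ℝ (p - y) (q - y)
  have hmid : ‖(1/2 : ℝ) • (p + q) - y‖ ^ 2
      = (1/2) * ‖p - y‖ ^ 2 + (1/2) * ‖q - y‖ ^ 2 - (1/4) * ‖p - q‖ ^ 2 := by
    have h1 : (1/2 : ℝ) • (p + q) - y = (1/2 : ℝ) • ((p - y) + (q - y)) := by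
      rw [smul_add, smul_add]; module
    have h2 : (p - y) - (q - y) = p - q := by abel
    have hpar2 : ‖(p - y) + (q - y)‖ ^ 2 + ‖p - q‖ ^ 2
        = 2 * (‖p - y‖ ^ 2 + ‖q - y‖ ^ 2) := by
      have h4 := hpar
      rw [h2] at h4
      simp only [pow_two]
      linarith
    rw [h1, norm_smul, Real.norm_eq_abs, abs_of_pos (by norm_num : (0:ℝ) < 1/2)]
    linear_combination (1/4) * hpar2
  have hgm : gauge C ((1/2 : ℝ) • (p + q)) ≤ (1/2) * gauge C p + (1/2) * gauge C q := by
    have := gauge_add_le hconv habs ((1/2:ℝ) • p) ((1/2:ℝ) • q)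
    rw [gauge_smul_of_nonneg (by norm_num : (0:ℝ) ≤ 1/2),
        gauge_smul_of_nonneg (by norm_num : (0:ℝ) ≤ 1/2)] at this
    simpa [smul_add, smul_eq_mul] using this
  have := mul_le_mul_of_nonneg_left hgm hθ
  nlinarith [hm]

/-- **Lipschitz continuity in `θ` of the proximal operator of a gauge**
(Proposition on `Prox_{θG}`).  If `C` is a compact convex subset of a
finite-dimensional real inner product space with `0` in its interior and
`G = gauge C`, then there is `L > 0`, independent of `y`, such that whenever `p`
minimizes `z ↦ (1/2)‖z - y‖² + θ G(z)` and `p'` minimizes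
`z ↦ (1/2)‖z - y‖² + θ' G(z)` (with `θ, θ' > 0`), one has `‖p - p'‖ ≤ L |θ - θ'|`. -/
theorem prox_gauge_lipschitz_in_theta
    {E : Type*} [NormedAddCommGroup E] [InnerProductSpace ℝ E] [FiniteDimensional ℝ E]
    (C : Set E) (hconv : Convex ℝ C) (hcomp : IsCompact C) (h0 : 0 ∈ interior C) :
    ∃ L : ℝ, 0 < L ∧ ∀ θ θ' : ℝ, 0 < θ → 0 < θ' → ∀ y p p' : E,
      (∀ z : E, (1 / 2) * ‖p - y‖ ^ 2 + θ * gauge C p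
          ≤ (1 / 2) * ‖z - y‖ ^ 2 + θ * gauge C z) →
      (∀ z : E, (1 / 2) * ‖p' - y‖ ^ 2 + θ' * gauge C p'
          ≤ (1 / 2) * ‖z - y‖ ^ 2 + θ' * gauge C z) →
      ‖p - p'‖ ≤ L * |θ - θ'| := by
  obtain ⟨r, hr, hball⟩ := Metric.mem_nhds_iff.mp (mem_interior_iff_mem_nhds.mp h0)
  have habs : Absorbent ℝ C := absorbent_nhds_zero (mem_interior_iff_mem_nhds.mp h0)
  have habsb : Absorbent ℝ (Metric.ball (0:E) r) :=
    absorbent_nhds_zero (Metric.ball_mem_nhds 0 hr)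
  -- gauge is (1/r)-Lipschitz-bounded: gauge C x ≤ ‖x‖ / r
  have hG : ∀ x : E, gauge C x ≤ ‖x‖ / r := fun x => by
    have := gauge_mono habsb hball x
    rwa [gauge_ball hr.le] at this
  refine ⟨2 / r, by positivity, fun θ θ' hθ hθ' y p p' hp hp' => ?_⟩
  have h1 := strong_min_gap C hconv habs θ hθ.le y p p' hp
  have h2 := strong_min_gap C hconv habs θ' hθ'.le y p' p hp'
  -- sum: (1/2)‖p-p'‖² ≤ (θ - θ')(gauge C p' - gauge C p)
  have key : (1/2) * ‖p - p'‖ ^ 2 ≤ (θ - θ') * (gauge C p' - gauge C p) := by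
    have hnorm : ‖p' - p‖ = ‖p - p'‖ := norm_sub_rev _ _
    rw [hnorm] at h2
    linarith
  -- |gauge C p' - gauge C p| ≤ ‖p - p'‖ / r, via subadditivity
  have hsub1 : gauge C p' - gauge C p ≤ ‖p - p'‖ / r := by
    have := gauge_add_le hconv habs p (p' - p)
    have h3 := hG (p' - p)
    rw [norm_sub_rev] at h3
    simp only [add_sub_cancel] at this
    linarith
  have hsub2 : gauge C p - gauge C p' ≤ ‖p - p'‖ / r := by
    have := gauge_add_le hconv habs p' (p - p')
    have h3 := hG (p - p')
    simp only [add_sub_cancel] at this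
    linarith
  have habs' : (θ - θ') * (gauge C p' - gauge C p) ≤ |θ - θ'| * (‖p - p'‖ / r) :=
    (le_abs_self _).trans <| by
      rw [abs_mul]
      exact mul_le_mul_of_nonneg_left (abs_sub_le_iff.mpr ⟨hsub1, hsub2⟩) (abs_nonneg _)
  have hfin : (1/2) * ‖p - p'‖ ^ 2 ≤ |θ - θ'| * (‖p - p'‖ / r) := key.trans habs'
  rcases eq_or_lt_of_le (norm_nonneg (p - p')) with h0' | h0'
  · rw [← h0']; positivity
  · have h5 : ‖p - p'‖ * ‖p - p'‖ ≤ (2 / r * |θ - θ'|) * ‖p - p'‖ := by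
      have : |θ - θ'| * (‖p - p'‖ / r) = (2 / r * |θ - θ'|) * ‖p - p'‖ / 2 := by ring
      linarith [hfin, this]
    exact le_of_mul_le_mul_right h5 h0'
end
end

section
/- Let E be a finite-dimensional real inner product space and C ⊆ E a compact convex set with 0 in its interior, let G = gauge C be its gauge, and let θ > 0, y ∈ E. If p minimizes z ↦ (1/2)‖z − y‖² + θ·G(z) over E, then ⟪y − p, x⟫ ≤ θ for all x ∈ C; that is, y − p lies in θ times the polar set C° = { z ∈ E : ⟪z, x⟫ ≤ 1 for all x ∈ C }. -/
open scoped RealInnerProductSpace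

noncomputable section

/-- **The prox residual of a gauge lies in the scaled polar set.**  If `C` is a compact
convex subset of a finite-dimensional real inner product space with `0` in its interior,
`G = gauge C`, `θ > 0`, and `p` minimizes `z ↦ (1/2)‖z - y‖² + θ G(z)`, then
`⟪y - p, x⟫ ≤ θ` for all `x ∈ C`, i.e. `y - p ∈ θ · C°`. -/
theorem prox_gauge_residual_in_polar
    {E : Type*} [NormedAddCommGroup E] [InnerProductSpace ℝ E] [FiniteDimensional ℝ E]
    (C : Set E) (hconv : Convex ℝ C) (hcomp : IsCompact C) (h0 : 0 ∈ interior C)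
    (θ : ℝ) (hθ : 0 < θ) (y p : E)
    (hp : ∀ z : E, (1 / 2) * ‖p - y‖ ^ 2 + θ * gauge C p
        ≤ (1 / 2) * ‖z - y‖ ^ 2 + θ * gauge C z) :
    ∀ x ∈ C, ⟪y - p, x⟫ ≤ θ := by
  intro x hx
  have habs : Absorbent ℝ C := absorbent_nhds_zero (mem_interior_iff_mem_nhds.mp h0)
  -- key estimate for each t > 0
  have key : ∀ t : ℝ, 0 < t → ⟪y - p, x⟫ ≤ θ + t * (‖x‖ ^ 2 / 2) := by
    intro t ht
    have h1 := hp (p + t • x)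
    have hg : gauge C (p + t • x) ≤ gauge C p + t := by
      calc gauge C (p + t • x) ≤ gauge C p + gauge C (t • x) := gauge_add_le hconv habs _ _
        _ ≤ gauge C p + t := by
            rw [gauge_smul_of_nonneg ht.le, smul_eq_mul]
            nlinarith [gauge_le_one_of_mem hx]
    have hnorm : ‖p + t • x - y‖ ^ 2
        = ‖p - y‖ ^ 2 + 2 * (t * ⟪p - y, x⟫) + t ^ 2 * ‖x‖ ^ 2 := by
      have : p + t • x - y = (p - y) + t • x := by abel
      rw [this, norm_add_sq_real, real_inner_smul_right, norm_smul]
      simp [mul_pow, abs_of_nonneg ht.le]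
    have hinner : ⟪y - p, x⟫ = -⟪p - y, x⟫ := by
      rw [← inner_neg_left]; congr 1; abel
    have h2 : 0 ≤ t * ⟪p - y, x⟫ + t ^ 2 * (‖x‖ ^ 2 / 2) + θ * t := by
      nlinarith [h1, hg, hnorm]
    rw [hinner]
    nlinarith [h2]
  -- pass to the limit t → 0⁺
  by_contra h
  push_neg at h
  have hε : 0 < ⟪y - p, x⟫ - θ := by linarith
  set ε := ⟪y - p, x⟫ - θ with hεdef
  have hc : (0:ℝ) ≤ ‖x‖ ^ 2 / 2 := by positivity
  have := key (ε / (‖x‖ ^ 2 / 2 + 1)) (by positivity)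
  have hlt : ε / (‖x‖ ^ 2 / 2 + 1) * (‖x‖ ^ 2 / 2) < ε := by
    rw [div_mul_eq_mul_div, div_lt_iff₀ (by positivity)]
    nlinarith
  linarith
end
end

section
/- Let Φ : ℝ^N → ℝ^P be a linear map, ξ > 0, x ∈ ℝ^N and y ∈ ℝ^P. Then the linear map Id_P + ξ Φ Φᵀ on ℝ^P is invertible, and the unique minimizer of z ↦ (1/2)‖z − x‖² + (ξ/2)‖Φ z − y‖² over ℝ^N is z* = x + ξ Φᵀ y − ξ Φᵀ (Id_P + ξ Φ Φᵀ)^{-1} Φ (x + ξ Φᵀ y). -/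
/-!
`⟪(1 + ξAAᵀ)u, u⟫ = ‖u‖² + ξ‖Aᵀu‖² ≥ ‖u‖²`, so `1 + ξAAᵀ` is coercive and hence bijective by
Lax–Milgram. The objective is quadratic: around any `z`, it equals its value at `z` plus a term
linear in the increment `w` (the gradient `z - x + ξAᵀ(Az - y)` paired with `w`) plus
`½‖w‖² + (ξ/2)‖Aw‖²`, which is positive for `w ≠ 0`. So a critical point is the strict minimizer,
and the Woodbury candidate is one: from `(1 + ξAAᵀ)v = A(x + ξAᵀy)` one reads off `Az* = v`.
-/

open ContinuousLinearMap

noncomputable section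

open scoped InnerProductSpace

/-- Lax–Milgram, for the bilinear form `(u, w) ↦ ⟪T u, w⟫`. -/
theorem ContinuousLinearMap.bijective_of_coercive {V : Type*} [NormedAddCommGroup V]
    [InnerProductSpace ℝ V] [CompleteSpace V] {T : V →L[ℝ] V} {c : ℝ} (hc : 0 < c)
    (hT : ∀ u, c * ‖u‖ ^ 2 ≤ ⟪T u, u⟫_ℝ) : Function.Bijective T := by
  set B : V →L[ℝ] V →L[ℝ] ℝ := innerSL ℝ ∘L T
  have hB : IsCoercive B := ⟨c, hc, fun u => by rw [mul_assoc, ← sq]; exact hT u⟩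
  have hBT : InnerProductSpace.continuousLinearMapOfBilin B = T := by
    ext1 u
    refine ext_inner_right ℝ fun w => ?_
    rw [InnerProductSpace.continuousLinearMapOfBilin_apply]
    rfl
  rw [← hBT]
  exact ⟨LinearMap.ker_eq_bot.mp hB.ker_eq_bot, LinearMap.range_eq_top.mp hB.range_eq_top⟩

variable {E F : Type*} [NormedAddCommGroup E] [InnerProductSpace ℝ E] [CompleteSpace E]
  [NormedAddCommGroup F] [InnerProductSpace ℝ F] [CompleteSpace F]

theorem inner_one_add_smul_comp_adjoint_apply_self (A : E →L[ℝ] F) (ξ : ℝ) (u : F) :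
    ⟪((1 : F →L[ℝ] F) + ξ • (A ∘L adjoint A)) u, u⟫_ℝ = ‖u‖ ^ 2 + ξ * ‖adjoint A u‖ ^ 2 := by
  rw [add_apply, one_apply_eq_self, smul_apply, comp_apply, inner_add_left, real_inner_smul_left,
    real_inner_self_eq_norm_sq, ← adjoint_inner_right, real_inner_self_eq_norm_sq]

theorem bijective_one_add_smul_comp_adjoint (A : E →L[ℝ] F) {ξ : ℝ} (hξ : 0 ≤ ξ) :
    Function.Bijective ((1 : F →L[ℝ] F) + ξ • (A ∘L adjoint A)) :=
  bijective_of_coercive one_pos fun u => by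
    rw [inner_one_add_smul_comp_adjoint_apply_self]
    nlinarith [sq_nonneg ‖adjoint A u‖]

def proxObjective (A : E →L[ℝ] F) (ξ : ℝ) (x : E) (y : F) (z : E) : ℝ :=
  1 / 2 * ‖z - x‖ ^ 2 + ξ / 2 * ‖A z - y‖ ^ 2

def proxObjectiveGrad (A : E →L[ℝ] F) (ξ : ℝ) (x : E) (y : F) (z : E) : E :=
  z - x + ξ • adjoint A (A z - y)

theorem proxObjective_add (A : E →L[ℝ] F) (ξ : ℝ) (x : E) (y : F) (z w : E) :
    proxObjective A ξ x y (z + w) = proxObjective A ξ x y z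
      + ⟪proxObjectiveGrad A ξ x y z, w⟫_ℝ + 1 / 2 * ‖w‖ ^ 2 + ξ / 2 * ‖A w‖ ^ 2 := by
  have hx : z + w - x = (z - x) + w := by abel
  have hy : A (z + w) - y = (A z - y) + A w := by rw [map_add]; abel
  simp only [proxObjective, proxObjectiveGrad, hx, hy, norm_add_sq_real, inner_add_left,
    real_inner_smul_left, adjoint_inner_left]
  ring

theorem proxObjective_lt_of_grad_eq_zero (A : E →L[ℝ] F) {ξ : ℝ} (hξ : 0 ≤ ξ) (x : E) (y : F)
    {z z' : E} (hz : proxObjectiveGrad A ξ x y z = 0) (hne : z' ≠ z) :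
    proxObjective A ξ x y z < proxObjective A ξ x y z' := by
  have hw : 0 < ‖z' - z‖ := norm_pos_iff.mpr (sub_ne_zero.mpr hne)
  have h := proxObjective_add A ξ x y z (z' - z)
  rw [add_sub_cancel, hz, inner_zero_left] at h
  rw [h]
  nlinarith [sq_nonneg ‖A (z' - z)‖]

theorem proxObjectiveGrad_woodbury_eq_zero (A : E →L[ℝ] F) (ξ : ℝ) (x : E) (y : F) {v : F}
    (hv : ((1 : F →L[ℝ] F) + ξ • (A ∘L adjoint A)) v = A (x + ξ • adjoint A y)) :
    proxObjectiveGrad A ξ x y (x + ξ • adjoint A y - ξ • adjoint A v) = 0 := by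
  have hAv : A (x + ξ • adjoint A y - ξ • adjoint A v) = v := by
    rw [map_sub, ← hv, map_smul]
    simp only [add_apply, smul_apply, comp_apply]
    abel
  rw [proxObjectiveGrad, hAv, map_sub, smul_sub]
  abel

/-- **Closed form (Woodbury form) of the proximal operator of the data-fidelity term.**
For a linear map `Φ : ℝ^N → ℝ^P`, `ξ > 0`, `x ∈ ℝ^N`, `y ∈ ℝ^P`, the operator
`Id_P + ξ Φ Φᵀ` is invertible, and the unique minimizer of
`z ↦ (1/2)‖z - x‖² + (ξ/2)‖Φ z - y‖²` is
`z* = x + ξ Φᵀ y - ξ Φᵀ (Id_P + ξ Φ Φᵀ)⁻¹ Φ (x + ξ Φᵀ y)`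
(the inverse being expressed by the vector `v` with `(Id_P + ξ Φ Φᵀ) v = Φ (x + ξ Φᵀ y)`). -/
theorem prox_data_fidelity_closed_form
    {N P : ℕ} (Φ : EuclideanSpace ℝ (Fin N) →L[ℝ] EuclideanSpace ℝ (Fin P))
    (ξ : ℝ) (hξ : 0 < ξ) (x : EuclideanSpace ℝ (Fin N)) (y : EuclideanSpace ℝ (Fin P)) :
    Function.Bijective
        ((1 : EuclideanSpace ℝ (Fin P) →L[ℝ] EuclideanSpace ℝ (Fin P))
          + ξ • (Φ ∘L ContinuousLinearMap.adjoint Φ)) ∧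
      ∀ v : EuclideanSpace ℝ (Fin P),
        ((1 : EuclideanSpace ℝ (Fin P) →L[ℝ] EuclideanSpace ℝ (Fin P))
            + ξ • (Φ ∘L ContinuousLinearMap.adjoint Φ)) v
          = Φ (x + ξ • ContinuousLinearMap.adjoint Φ y) →
        ∀ z : EuclideanSpace ℝ (Fin N),
          z ≠ x + ξ • ContinuousLinearMap.adjoint Φ y - ξ • ContinuousLinearMap.adjoint Φ v →
          (1 / 2) * ‖(x + ξ • ContinuousLinearMap.adjoint Φ y
                - ξ • ContinuousLinearMap.adjoint Φ v) - x‖ ^ 2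
              + (ξ / 2) * ‖Φ (x + ξ • ContinuousLinearMap.adjoint Φ y
                - ξ • ContinuousLinearMap.adjoint Φ v) - y‖ ^ 2
            < (1 / 2) * ‖z - x‖ ^ 2 + (ξ / 2) * ‖Φ z - y‖ ^ 2 :=
  ⟨bijective_one_add_smul_comp_adjoint Φ hξ.le, fun _ hv _ hz =>
    proxObjective_lt_of_grad_eq_zero Φ hξ.le x y (proxObjectiveGrad_woodbury_eq_zero Φ ξ x y hv) hz⟩
end
end

section
/- Let E be a real inner product space, ρ > 0 and t ∈ E. Then the unique minimizer of z ↦ (1/2)‖z − t‖² + ρ‖z‖ over E is 0 if ‖t‖ ≤ ρ, and (1 − ρ/‖t‖)·t if ‖t‖ > ρ. -/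
/-!
If `g := t - p` satisfies `‖g‖ ≤ ρ` and `⟪p, g⟫ = ρ‖p‖`, i.e. `g` is a subgradient of `ρ‖·‖` at `p`,
then expanding `½‖z - t‖² = ½‖(z - p) - g‖²` and using Cauchy–Schwarz gives
`½‖z - t‖² + ρ‖z‖ ≥ ½‖p - t‖² + ρ‖p‖ + ½‖z - p‖²`, so `p` is the strict minimizer.
Soft thresholding `p` satisfies both conditions: for `‖t‖ ≤ ρ` trivially with `p = 0`, otherwise
`g = (ρ / ‖t‖) • t` has norm `ρ` and points in the direction of `p`.
-/

open RealInnerProductSpace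

section ProxNorm

variable {E : Type*} [NormedAddCommGroup E] [InnerProductSpace ℝ E]

theorem add_half_norm_sub_sq_le_of_isSubgradient {ρ : ℝ} {t p : E}
    (hg : ‖t - p‖ ≤ ρ) (hp : ⟪p, t - p⟫ = ρ * ‖p‖) (z : E) :
    (1 / 2) * ‖p - t‖ ^ 2 + ρ * ‖p‖ + (1 / 2) * ‖z - p‖ ^ 2
      ≤ (1 / 2) * ‖z - t‖ ^ 2 + ρ * ‖z‖ := by
  have hexpand : ‖z - t‖ ^ 2 = ‖z - p‖ ^ 2 - 2 * ⟪z - p, t - p⟫ + ‖t - p‖ ^ 2 := by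
    rw [← norm_sub_sq_real, sub_sub_sub_cancel_right]
  have hcs : ⟪z, t - p⟫ ≤ ‖z‖ * ρ :=
    (real_inner_le_norm z (t - p)).trans (mul_le_mul_of_nonneg_left hg (norm_nonneg z))
  rw [hexpand, norm_sub_rev p t, inner_sub_left, hp]
  nlinarith

theorem lt_of_isSubgradient {ρ : ℝ} {t p z : E}
    (hg : ‖t - p‖ ≤ ρ) (hp : ⟪p, t - p⟫ = ρ * ‖p‖) (hz : z ≠ p) :
    (1 / 2) * ‖p - t‖ ^ 2 + ρ * ‖p‖ < (1 / 2) * ‖z - t‖ ^ 2 + ρ * ‖z‖ := by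
  have hzp : 0 < ‖z - p‖ := norm_pos_iff.mpr (sub_ne_zero.mpr hz)
  linarith [add_half_norm_sub_sq_le_of_isSubgradient hg hp z, pow_pos hzp 2]

noncomputable def blockSoftThreshold (ρ : ℝ) (t : E) : E :=
  if ‖t‖ ≤ ρ then 0 else (1 - ρ / ‖t‖) • t

theorem sub_blockSoftThreshold_of_lt {ρ : ℝ} {t : E} (h : ρ < ‖t‖) :
    t - blockSoftThreshold ρ t = (ρ / ‖t‖) • t := by
  rw [blockSoftThreshold, if_neg h.not_ge, sub_smul, one_smul, sub_sub_cancel]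

theorem norm_blockSoftThreshold_of_lt {ρ : ℝ} {t : E} (hρ : 0 ≤ ρ) (h : ρ < ‖t‖) :
    ‖blockSoftThreshold ρ t‖ = ‖t‖ - ρ := by
  have ht : 0 < ‖t‖ := hρ.trans_lt h
  rw [blockSoftThreshold, if_neg h.not_ge, norm_smul, Real.norm_of_nonneg, sub_mul,
    div_mul_cancel₀ _ ht.ne', one_mul]
  rw [sub_nonneg, div_le_one ht]
  exact h.le

theorem norm_sub_blockSoftThreshold_le {ρ : ℝ} (hρ : 0 ≤ ρ) (t : E) :
    ‖t - blockSoftThreshold ρ t‖ ≤ ρ := by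
  by_cases h : ‖t‖ ≤ ρ
  · simp [blockSoftThreshold, h]
  · push Not at h
    have ht : 0 < ‖t‖ := hρ.trans_lt h
    rw [sub_blockSoftThreshold_of_lt h, norm_smul, Real.norm_of_nonneg (by positivity),
      div_mul_cancel₀ _ ht.ne']

theorem inner_blockSoftThreshold_sub {ρ : ℝ} (hρ : 0 ≤ ρ) (t : E) :
    ⟪blockSoftThreshold ρ t, t - blockSoftThreshold ρ t⟫ = ρ * ‖blockSoftThreshold ρ t‖ := by
  by_cases h : ‖t‖ ≤ ρ
  · simp [blockSoftThreshold, h]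
  · push Not at h
    have ht : 0 < ‖t‖ := hρ.trans_lt h
    rw [norm_blockSoftThreshold_of_lt hρ h, sub_blockSoftThreshold_of_lt h, blockSoftThreshold,
      if_neg h.not_ge, real_inner_smul_left, real_inner_smul_right, real_inner_self_eq_norm_sq]
    field_simp

end ProxNorm

/-- **Block (ℓ¹-ℓ²) soft-thresholding is the proximal operator of `ρ‖·‖`.**
In a real inner product space, for `ρ > 0` and `t`, the unique minimizer of
`z ↦ (1/2)‖z - t‖² + ρ‖z‖` is `0` if `‖t‖ ≤ ρ` and `(1 - ρ/‖t‖) • t` if `‖t‖ > ρ`. -/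
theorem block_soft_thresholding_prox
    {E : Type*} [NormedAddCommGroup E] [InnerProductSpace ℝ E]
    (ρ : ℝ) (hρ : 0 < ρ) (t : E) :
    ∀ z : E, z ≠ (if ‖t‖ ≤ ρ then (0 : E) else (1 - ρ / ‖t‖) • t) →
      (1 / 2) * ‖(if ‖t‖ ≤ ρ then (0 : E) else (1 - ρ / ‖t‖) • t) - t‖ ^ 2
          + ρ * ‖(if ‖t‖ ≤ ρ then (0 : E) else (1 - ρ / ‖t‖) • t)‖
        < (1 / 2) * ‖z - t‖ ^ 2 + ρ * ‖z‖ := fun _ hz =>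
  lt_of_isSubgradient (p := blockSoftThreshold ρ t)
    (norm_sub_blockSoftThreshold_le hρ.le t) (inner_blockSoftThreshold_sub hρ.le t) hz
end
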